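/- Let i ∈ Σ_{n+1}, let k ∈ [n], and let t be the node of G(i) at which the wires ℓ_k and ℓ_{n+1} intersect. Then there exists a rigorous path P ∈ GP(i) (in G(i,k)) such that: t is the unique peak of P; P switches from ℓ_k to ℓ_{n+1} at t; P stays below the wire ℓ_{n+1}; and in its wire-expression ℓ_{r_p} → ⋯ → ℓ_{r_1} → ℓ_k → ℓ_{n+1} → ℓ_{s_q} → ⋯ → ℓ_{s_1}, the sequence r_1, …, r_p is increasing and the sequence s_1, …, s_q is decreasing. -/

import Mathlib

/-!
The path is glued from two greedy walks that start at `t` and run down the diagram.  The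
ascending walk follows `ℓ_k` and switches at every node to a larger wire other than `ℓ_{n+1}`; it
ends on some wire `ℓ_α`, and read backwards it climbs legally from `L_α` to `t` in `G(i, α)`.
The descending walk follows `ℓ_{n+1}` and switches at every node to a smaller wire `ℓ_x` with
`x > α`, which is exactly where going straight would be a forbidden fragment.  It ends on
`ℓ_{α+1}`: otherwise `ℓ_{α+1}` would have crossed both `ℓ_k` and `ℓ_{n+1}` above `t`, where these
two wires sit in adjacent columns.

In a reduced word every pair of wires crosses exactly once, and a route keeps its column where it
switches wires.  Hence two routes that never share a node keep their left-to-right order: below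
`t` the descending walk stays on one side of the ascending walk, so they never meet, and both stay
below `ℓ_{n+1}`.  The peak and the monotonicity of the wire-expression are read off the triggers.
-/

open scoped Classical

noncomputable section

namespace StringPolytope

/-! ### Words, reduced words, two-moves -/

/-- the simple transposition `s_a = (a, a+1)` acting on `ℕ` (wires are `1, …, n+1`). -/
def sTrans (a : ℕ) : Equiv.Perm ℕ := Equiv.swap a (a + 1)

/-- product `s_{i₁} ⋯ s_{i_N}` of the simple transpositions of a word. -/
def wordProd (w : List ℕ) : Equiv.Perm ℕ := (w.map sTrans).prod

/-- the longest element `w₀` of the symmetric group on `{1, …, n+1}`,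
sending `k ↦ n + 2 - k` there and fixing everything else. -/
def longestPerm (n : ℕ) : Equiv.Perm ℕ :=
  Function.Involutive.toPerm
    (fun k => if 1 ≤ k ∧ k ≤ n + 1 then n + 2 - k else k)
    (by intro k; dsimp only; split_ifs <;> omega)

/-- `w ∈ Σ_{n+1}`: a reduced word of the longest element of `S_{n+1}`,
i.e. a word over `[n] = {1,…,n}` of length `N = n(n+1)/2` whose product is `w₀`. -/
def IsReduced (n : ℕ) (w : List ℕ) : Prop :=
  w.length = n * (n + 1) / 2 ∧ (∀ a ∈ w, 1 ≤ a ∧ a ≤ n) ∧ wordProd w = longestPerm n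

/-- a single 2-move: exchange two adjacent letters `(a, b)` with `|a - b| > 1`. -/
def TwoMoveStep (w w' : List ℕ) : Prop :=
  ∃ u v a b, (a + 1 < b ∨ b + 1 < a) ∧ w = u ++ a :: b :: v ∧ w' = u ++ b :: a :: v

/-- 2-move equivalence of words. -/
def TwoMoveEquiv : List ℕ → List ℕ → Prop := Relation.ReflTransGen TwoMoveStep

/-- `A_n = (1, 2, …, n)`. -/
def ascWord (n : ℕ) : List ℕ := (List.range n).map (· + 1)

/-- `D_n = (n, n-1, …, 1)`. -/
def descWord (n : ℕ) : List ℕ := (ascWord n).reverse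

/-! ### The wiring diagram -/

/-- the letter `i_j` of `w` (1-based index `j`); the node `t_j` lies in column `i_j`. -/
def letterAt (w : List ℕ) (j : ℕ) : ℕ := w.getD (j - 1) 0

/-- `1 ≤ j ≤ N`: `t_j` is an actual node of the diagram. -/
def ValidNode (w : List ℕ) (j : ℕ) : Prop := 1 ≤ j ∧ j ≤ w.length

/-- the column-to-wire assignment just above node `t_j`
(at the top of the diagram, wire `k` is in column `k`). -/
def stateAbove (w : List ℕ) (j : ℕ) : Equiv.Perm ℕ := wordProd (w.take (j - 1))

/-- the column-to-wire assignment just below node `t_j`. -/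
def stateBelow (w : List ℕ) (j : ℕ) : Equiv.Perm ℕ := wordProd (w.take j)

/-- one of the two wires crossing at node `t_j` (the one leaving upward-left). -/
def wireX (w : List ℕ) (j : ℕ) : ℕ := stateAbove w j (letterAt w j)

/-- the other wire crossing at node `t_j` (the one leaving upward-right). -/
def wireY (w : List ℕ) (j : ℕ) : ℕ := stateAbove w j (letterAt w j + 1)

/-- the node `t_j` lies on the wire `ℓ_r`. -/
def NodeOnWire (w : List ℕ) (j r : ℕ) : Prop := wireX w j = r ∨ wireY w j = r

/-- given one wire `r` at node `t_j`, the other wire crossing there. -/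
def otherWire (w : List ℕ) (j r : ℕ) : ℕ := if wireX w j = r then wireY w j else wireX w j

/-- the column of wire `ℓ_r` at the height of node `t_j`. -/
def wireCol (w : List ℕ) (j r : ℕ) : ℕ := (stateBelow w j).symm r

/-- node `t_j` lies strictly below the wire `ℓ_{n+1}`
(which runs from the bottom-left corner to the top-right corner). -/
def BelowWireLast (n : ℕ) (w : List ℕ) (j : ℕ) : Prop :=
  wireCol w j (n + 1) < letterAt w j

/-- node `t_j` lies strictly above the wire `ℓ_{n+1}`. -/
def AboveWireLast (n : ℕ) (w : List ℕ) (j : ℕ) : Prop :=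
  letterAt w j + 1 < wireCol w j (n + 1)

/-- node `t_j` lies strictly below the wire `ℓ_1`
(which runs from the bottom-right corner to the top-left corner). -/
def BelowWireOne (w : List ℕ) (j : ℕ) : Prop :=
  letterAt w j + 1 < wireCol w j 1

/-- node `t_j` lies strictly above the wire `ℓ_1`. -/
def AboveWireOne (w : List ℕ) (j : ℕ) : Prop :=
  wireCol w j 1 < letterAt w j

/-! ### Rigorous (Gleizer–Postnikov) paths

A path in `G(i, k)` is encoded by `k` together with the list of its switching
nodes, in order of travel.  Wires `ℓ_1, …, ℓ_k` are oriented upward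
(decreasing node index) and the remaining wires downward. -/

/-- the (1-based indices of the) nodes lying on wire `ℓ_r`, in order of increasing index. -/
def nodesOn (w : List ℕ) (r : ℕ) : List ℕ :=
  ((List.range w.length).map (· + 1)).filter (fun j => decide (NodeOnWire w j r))

/-- nodes on wire `ℓ_r` strictly between the nodes `t_a` and `t_b`. -/
def segList (w : List ℕ) (r a b : ℕ) : List ℕ :=
  (nodesOn w r).filter (fun j => decide (min a b < j ∧ j < max a b))

/-- nodes on wire `ℓ_r` strictly below the node `t_a`. -/
def tailList (w : List ℕ) (r a : ℕ) : List ℕ :=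
  (nodesOn w r).filter (fun j => decide (a < j))

/-- a forbidden fragment of `G(i, k)`: the path passes straight through node `t_j`
travelling along the wire `ℓ_r`, where the other wire `ℓ_b` crossing there has the same
orientation as `ℓ_r` and (`r < b` if both upward, `r > b` if both downward). -/
def Forbidden (w : List ℕ) (k j r : ℕ) : Prop :=
  (r ≤ k ∧ otherWire w j r ≤ k ∧ r < otherWire w j r) ∨
  (k < r ∧ k < otherWire w j r ∧ otherWire w j r < r)

/-- travelling in `G(i,k)`: currently on wire `ℓ_r` at node `t_a` (just switched there),
with future switching nodes `ms`; the travel is legal and ends at `L_{k+1}`. -/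
def TravelOK (w : List ℕ) (k : ℕ) : ℕ → ℕ → List ℕ → Prop
  | r, a, [] => r = k + 1 ∧ ∀ j ∈ tailList w r a, ¬ Forbidden w k j r
  | r, a, m :: ms =>
      ValidNode w m ∧ NodeOnWire w m r ∧
      (if r ≤ k then m < a else a < m) ∧
      (∀ j ∈ segList w r a m, ¬ Forbidden w k j r) ∧
      TravelOK w k (otherWire w m r) m ms

/-- all nodes visited after the switch at node `t_a` onto wire `ℓ_r`. -/
def visitTail (w : List ℕ) : ℕ → ℕ → List ℕ → List ℕ
  | r, a, [] => tailList w r a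
  | r, a, m :: ms => segList w r a m ++ m :: visitTail w (otherWire w m r) m ms

/-- the list of all nodes visited by the path (switching nodes and straight passes). -/
def visitList (w : List ℕ) (k : ℕ) : List ℕ → List ℕ
  | [] => []
  | m :: ms => tailList w k m ++ m :: visitTail w (otherWire w m k) m ms

/-- `(k, ms)` encodes a rigorous (Gleizer–Postnikov) path in `G(i, k)`:
it starts at `L_k` going up the wire `ℓ_k`, switches wires exactly at the nodes
listed in `ms`, respects the orientation, ends at `L_{k+1}`, contains no forbidden
fragment and passes through each node at most once. -/
def IsGPPath (n : ℕ) (w : List ℕ) (k : ℕ) (ms : List ℕ) : Prop :=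
  1 ≤ k ∧ k ≤ n ∧
  (match ms with
   | [] => False
   | m :: rest =>
       ValidNode w m ∧ NodeOnWire w m k ∧
       (∀ j ∈ tailList w k m, ¬ Forbidden w k j k) ∧
       TravelOK w k (otherWire w m k) m rest) ∧
  (visitList w k ms).Nodup

/-- the set `GP(i)` of all rigorous paths of `G(i)`. -/
def GP (n : ℕ) (w : List ℕ) : Set (ℕ × List ℕ) := {p | IsGPPath n w p.1 p.2}

/-- `|GP(i)|`, the number of rigorous paths. -/
def numGP (n : ℕ) (w : List ℕ) : ℕ := (GP n w).ncard

/-- the successive switches of a path: `(node, from-wire, to-wire)`. -/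
def pathSwitches (w : List ℕ) : ℕ → List ℕ → List (ℕ × ℕ × ℕ)
  | _, [] => []
  | r, m :: ms => (m, r, otherWire w m r) :: pathSwitches w (otherWire w m r) ms

/-- the wire-expression of a path: the successive wires travelled. -/
def wireSeq (w : List ℕ) : ℕ → List ℕ → List ℕ
  | r, [] => [r]
  | r, m :: ms => r :: wireSeq w (otherWire w m r) ms

/-- the peaks of a path: switching nodes where the path switches from an
upward wire to a downward wire. -/
def peaks (w : List ℕ) (k : ℕ) (ms : List ℕ) : List ℕ :=
  ((pathSwitches w k ms).filter (fun e => decide (e.2.1 ≤ k ∧ k < e.2.2))).map (·.1)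

/-! ### String cone, `λ`-cone, string polytope -/

/-- `N = n(n+1)/2`, the number of nodes. -/
abbrev Dim (n : ℕ) : ℕ := n * (n + 1) / 2

/-- the coefficient `a_j` of `t_j` in the string inequality of the path `(k, ms)`:
`+1` if the path switches at `t_j` from `ℓ_r` to `ℓ_s` with `r < s`,
`-1` if it switches with `r > s`, and `0` otherwise. -/
def coeff (w : List ℕ) (k : ℕ) (ms : List ℕ) (j : ℕ) : ℝ :=
  ((pathSwitches w k ms).map (fun e =>
    if e.1 = j then (if e.2.1 < e.2.2 then (1 : ℝ) else -1) else 0)).sum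

/-- the (primitive inward normal) coefficient vector of the string inequality of a path. -/
def normalVec (n : ℕ) (w : List ℕ) (p : ℕ × List ℕ) : Fin (Dim n) → ℝ :=
  fun j => coeff w p.1 p.2 ((j : ℕ) + 1)

/-- the left-hand side `∑ a_j t_j` of the string inequality of the path `p`. -/
def stringIneq (n : ℕ) (w : List ℕ) (p : ℕ × List ℕ) (t : Fin (Dim n) → ℝ) : ℝ :=
  ∑ j : Fin (Dim n), normalVec n w p j * t j

/-- the string cone `C_i ⊆ ℝ^N`. -/
def stringCone (n : ℕ) (w : List ℕ) : Set (Fin (Dim n) → ℝ) :=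
  {t | ∀ p ∈ GP n w, 0 ≤ stringIneq n w p t}

/-- the polyhedron cut out by all string inequalities except the one of `p₀`. -/
def stringConeExcept (n : ℕ) (w : List ℕ) (p₀ : ℕ × List ℕ) : Set (Fin (Dim n) → ℝ) :=
  {t | ∀ p ∈ GP n w, p ≠ p₀ → 0 ≤ stringIneq n w p t}

/-- the coefficient `a_k` in the `λ`-inequality of node `t_j`:
`1` if `t_k` is one column left or right of `t_j`, `-2` if in the same column. -/
def lamCoeff (w : List ℕ) (j k : ℕ) : ℝ :=
  if letterAt w k = letterAt w j then -2
  else if letterAt w k = letterAt w j + 1 ∨ letterAt w k + 1 = letterAt w j then 1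
  else 0

/-- the `λ`-inequality of node `t_{j+1}`:
`t_j ≤ λ_{i_j} + ∑_{k > j} a_k t_k`. -/
def LamIneq (n : ℕ) (w : List ℕ) (lam : ℕ → ℤ) (j : Fin (Dim n)) (t : Fin (Dim n) → ℝ) : Prop :=
  t j ≤ (lam (letterAt w ((j : ℕ) + 1)) : ℝ) +
    ∑ k : Fin (Dim n),
      (if (j : ℕ) < (k : ℕ) then lamCoeff w ((j : ℕ) + 1) ((k : ℕ) + 1) else 0) * t k

/-- the `λ`-cone `C_i^λ ⊆ ℝ^N`. -/
def lamCone (n : ℕ) (w : List ℕ) (lam : ℕ → ℤ) : Set (Fin (Dim n) → ℝ) :=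
  {t | ∀ j, LamIneq n w lam j t}

/-- the polyhedron cut out by all `λ`-inequalities except the one of `j₀`. -/
def lamConeExcept (n : ℕ) (w : List ℕ) (lam : ℕ → ℤ) (j₀ : Fin (Dim n)) :
    Set (Fin (Dim n) → ℝ) :=
  {t | ∀ j, j ≠ j₀ → LamIneq n w lam j t}

/-- the string polytope `Δ_i(λ) = C_i ∩ C_i^λ`. -/
def stringPolytope (n : ℕ) (w : List ℕ) (lam : ℕ → ℤ) : Set (Fin (Dim n) → ℝ) :=
  stringCone n w ∩ lamCone n w lam

/-- `λ = λ_1 ϖ_1 + ⋯ + λ_n ϖ_n` is a dominant integral weight: all `λ_j ≥ 0`. -/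
def Dominant (n : ℕ) (lam : ℕ → ℤ) : Prop := ∀ j, 1 ≤ j → j ≤ n → 0 ≤ lam j

/-- `λ` is a regular dominant integral weight: all `λ_j > 0`. -/
def RegularDominant (n : ℕ) (lam : ℕ → ℤ) : Prop := ∀ j, 1 ≤ j → j ≤ n → 0 < lam j

/-! ### Unimodular equivalence, Gelfand–Cetlin polytope, facets -/

/-- `P` and `Q` are unimodularly equivalent: `Q = M(P) + v` with `M ∈ GL(m, ℤ)`, `v ∈ ℤ^m`. -/
def UnimodEquiv {m : ℕ} (P Q : Set (Fin m → ℝ)) : Prop :=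
  ∃ (M : Matrix (Fin m) (Fin m) ℤ) (v : Fin m → ℤ), IsUnit M.det ∧
    Q = (fun x i => (∑ j, (M i j : ℝ) * x j) + (v i : ℝ)) '' P

/-- the entry `x_{k,j}` (`1 ≤ j ≤ k ≤ n+1`) of a Gelfand–Cetlin pattern, where the
top row is `x_{n+1,j} = λ_j + ⋯ + λ_n` and `x_{n+1,n+1} = 0`; the pair `(k, j)` is
encoded as the coordinate `k(k-1)/2 + (j-1)` of `ℝ^N`. -/
def gcX (n : ℕ) (lam : ℕ → ℤ) (x : Fin (Dim n) → ℝ) (k j : ℕ) : ℝ :=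
  if k = n + 1 then (if j ≤ n then ∑ t ∈ Finset.Icc j n, (lam t : ℝ) else 0)
  else if h : k * (k - 1) / 2 + (j - 1) < Dim n then x ⟨k * (k - 1) / 2 + (j - 1), h⟩ else 0

/-- the Gelfand–Cetlin polytope `GC(λ) ⊆ ℝ^N`. -/
def GCPolytope (n : ℕ) (lam : ℕ → ℤ) : Set (Fin (Dim n) → ℝ) :=
  {x | ∀ k j, 1 ≤ k → k ≤ n → 1 ≤ j → j ≤ k →
      gcX n lam x k j ≤ gcX n lam x (k + 1) j ∧
      gcX n lam x (k + 1) (j + 1) ≤ gcX n lam x k j}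

/-- a face of a convex set: a convex extreme subset. -/
def IsFaceSet {m : ℕ} (S F : Set (Fin m → ℝ)) : Prop := IsExtreme ℝ S F ∧ Convex ℝ F

/-- a facet: a maximal proper face. -/
def IsFacet {m : ℕ} (S F : Set (Fin m → ℝ)) : Prop :=
  IsFaceSet S F ∧ F ≠ S ∧ ∀ G, IsFaceSet S G → G ≠ S → F ⊆ G → F = G

/-- the number of facets. -/
def numFacets {m : ℕ} (S : Set (Fin m → ℝ)) : ℕ := {F | IsFacet S F}.ncard

/-- combinatorial equivalence: an inclusion-preserving bijection between face lattices. -/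
def CombEquiv {m : ℕ} (S T : Set (Fin m → ℝ)) : Prop :=
  ∃ e : {F // IsFaceSet S F} ≃ {F // IsFaceSet T F},
    ∀ F G : {F // IsFaceSet S F}, F.1 ⊆ G.1 ↔ (e F).1 ⊆ (e G).1

/-! ### Indices, contractions and extensions -/

/-- the `D`-index `ind_D(i) = |i_D^+|` for a decomposition `i ∼ i_D^- D_n i_D^+`
(independent of the decomposition). -/
def indD (n : ℕ) (w : List ℕ) : ℕ :=
  sInf {s | ∃ u v : List ℕ, v.length = s ∧ TwoMoveEquiv w (u ++ descWord n ++ v)}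

/-- the `A`-index `ind_A(i) = |i_A^+|` for a decomposition `i ∼ i_A^- A_n i_A^+`. -/
def indA (n : ℕ) (w : List ℕ) : ℕ :=
  sInf {s | ∃ u v : List ℕ, v.length = s ∧ TwoMoveEquiv w (u ++ ascWord n ++ v)}

/-- `w'` is a `D`-contraction `C_D(w) = i_D^- (i_D^+ - 1)` of `w ∈ Σ_{n+1}`. -/
def IsContractionD (n : ℕ) (w w' : List ℕ) : Prop :=
  ∃ u v : List ℕ, TwoMoveEquiv w (u ++ descWord n ++ v) ∧ w' = u ++ v.map (· - 1)

/-- `w'` is an `A`-contraction `C_A(w) = (i_A^- - 1) i_A^+` of `w ∈ Σ_{n+1}`. -/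
def IsContractionA (n : ℕ) (w w' : List ℕ) : Prop :=
  ∃ u v : List ℕ, TwoMoveEquiv w (u ++ ascWord n ++ v) ∧ w' = u.map (· - 1) ++ v

/-- the `D`-extension `E_D(s) : Σ_{n+1} → Σ_{n+2}`,
`i = i^-(s) i^+(s) ↦ i^-(s) D_{n+1} (i^+(s) + 1)` where `|i^+(s)| = s`. -/
def extD (n : ℕ) (s : ℕ) (w : List ℕ) : List ℕ :=
  w.take (w.length - s) ++ descWord (n + 1) ++ (w.drop (w.length - s)).map (· + 1)

/-- the `A`-extension `E_A(s) : Σ_{n+1} → Σ_{n+2}`,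
`i = i^-(s) i^+(s) ↦ (i^-(s) + 1) A_{n+1} i^+(s)`. -/
def extA (n : ℕ) (s : ℕ) (w : List ℕ) : List ℕ :=
  (w.take (w.length - s)).map (· + 1) ++ ascWord (n + 1) ++ w.drop (w.length - s)

/-- there exists `(σ_1, …, σ_n) ∈ {A, D}^n` (here `true = D`, `false = A`) such that
`ind_{σ_k}(C_{σ_{k+1}} ∘ ⋯ ∘ C_{σ_n}(i)) = 0` for all `k = n, …, 1`. -/
def SimplicialWord (n : ℕ) (w : List ℕ) : Prop :=
  ∃ (σ : ℕ → Bool) (c : ℕ → List ℕ), c n = w ∧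
    ∀ k, 1 ≤ k → k ≤ n →
      (if σ k then IsContractionD k (c k) (c (k - 1)) ∧ indD k (c k) = 0
       else IsContractionA k (c k) (c (k - 1)) ∧ indA k (c k) = 0)


/-- the `D`-coindex `coind_D(i) = |i_D^-|`. -/
def coindD (n : ℕ) (w : List ℕ) : ℕ :=
  sInf {s | ∃ u v : List ℕ, u.length = s ∧ TwoMoveEquiv w (u ++ descWord n ++ v)}

/-- the `A`-coindex `coind_A(i) = |i_A^-|`. -/
def coindA (n : ℕ) (w : List ℕ) : ℕ :=
  sInf {s | ∃ u v : List ℕ, u.length = s ∧ TwoMoveEquiv w (u ++ ascWord n ++ v)}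

/-- the `a`-th (0-based) coordinate of a point of `ℝ^N`. -/
def entry (n : ℕ) (t : Fin (Dim n) → ℝ) (a : ℕ) : ℝ :=
  if h : a < Dim n then t ⟨a, h⟩ else 0

/-- the product of cones
`t_1 ≥ 0`, `t_2 ≥ t_3 ≥ 0`, …, `t_{N-n+1} ≥ ⋯ ≥ t_N ≥ 0` (in `ℝ^N`, 1-based:
for `k = 1, …, n` the chain `t_{k(k-1)/2+1} ≥ ⋯ ≥ t_{k(k-1)/2+k} ≥ 0`). -/
def chainCone (n : ℕ) : Set (Fin (Dim n) → ℝ) :=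
  {t | ∀ k j, 1 ≤ k → k ≤ n → 1 ≤ j → j ≤ k →
    (if j = k then 0 else entry n t (k * (k - 1) / 2 + j)) ≤
      entry n t (k * (k - 1) / 2 + (j - 1))}


lemma sTrans_apply (a x : ℕ) :
    sTrans a x = if x = a then a + 1 else if x = a + 1 then a else x := by
  rw [sTrans, Equiv.swap_apply_def]

lemma sTrans_lt_sTrans_iff {a c d : ℕ} (h₁ : ¬(c = a ∧ d = a + 1)) (h₂ : ¬(c = a + 1 ∧ d = a)) :
    sTrans a c < sTrans a d ↔ c < d := by
  rw [sTrans_apply, sTrans_apply]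
  split_ifs <;> omega

lemma wordProd_take_succ {w : List ℕ} {h : ℕ} (hh : h < w.length) :
    wordProd (w.take (h + 1)) = wordProd (w.take h) * sTrans (letterAt w (h + 1)) := by
  rw [List.take_add_one, List.getElem?_eq_getElem hh, letterAt,
    List.getD_eq_getElem?_getD, Nat.add_sub_cancel, List.getElem?_eq_getElem hh]
  simp only [wordProd, Option.toList_some, List.map_append, List.prod_append, List.map_cons,
    List.map_nil, List.prod_singleton, Option.getD_some]

/-! ### Columns and crossings -/

/-- For `x < y`: the wires `ℓ_x` and `ℓ_y` have crossed above level `h`, the level between the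
nodes `t_h` and `t_{h+1}` whose columns `wireCol w h` records. -/
def Crossed (w : List ℕ) (h x y : ℕ) : Prop := wireCol w h y < wireCol w h x

section Columns

variable {w : List ℕ} {h : ℕ}

lemma wireCol_zero (w : List ℕ) (r : ℕ) : wireCol w 0 r = r := rfl

lemma wireCol_succ (hh : h < w.length) (r : ℕ) :
    wireCol w (h + 1) r = sTrans (letterAt w (h + 1)) (wireCol w h r) := by
  rw [wireCol, stateBelow, wordProd_take_succ hh]
  rfl

lemma wireCol_injective (w : List ℕ) (h : ℕ) : Function.Injective (wireCol w h) :=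
  Equiv.injective _

lemma wireCol_wireX (w : List ℕ) (h : ℕ) : wireCol w h (wireX w (h + 1)) = letterAt w (h + 1) :=
  Equiv.symm_apply_apply _ _

lemma wireCol_wireY (w : List ℕ) (h : ℕ) :
    wireCol w h (wireY w (h + 1)) = letterAt w (h + 1) + 1 :=
  Equiv.symm_apply_apply _ _

lemma wireX_ne_wireY (w : List ℕ) (h : ℕ) : wireX w (h + 1) ≠ wireY w (h + 1) := fun hXY => by
  simpa [wireCol_wireX, wireCol_wireY] using congrArg (wireCol w h) hXY

lemma nodeOnWire_iff_wireCol {r : ℕ} :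
    NodeOnWire w (h + 1) r ↔ wireCol w h r = letterAt w (h + 1) ∨
      wireCol w h r = letterAt w (h + 1) + 1 := by
  rw [← wireCol_wireY, ← wireCol_wireX, (wireCol_injective w h).eq_iff,
    (wireCol_injective w h).eq_iff, NodeOnWire, eq_comm, @eq_comm _ (wireY _ _)]

lemma wireCol_succ_wireX (hh : h < w.length) :
    wireCol w (h + 1) (wireX w (h + 1)) = letterAt w (h + 1) + 1 := by
  rw [wireCol_succ hh, wireCol_wireX, sTrans_apply, if_pos rfl]

lemma wireCol_succ_wireY (hh : h < w.length) :
    wireCol w (h + 1) (wireY w (h + 1)) = letterAt w (h + 1) := by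
  rw [wireCol_succ hh, wireCol_wireY, sTrans_apply, if_neg (by omega), if_pos rfl]

lemma wireCol_succ_of_not_nodeOnWire (hh : h < w.length) {r : ℕ}
    (hr : ¬ NodeOnWire w (h + 1) r) : wireCol w (h + 1) r = wireCol w h r := by
  rw [nodeOnWire_iff_wireCol, not_or] at hr
  rw [wireCol_succ hh, sTrans_apply, if_neg hr.1, if_neg hr.2]

lemma eq_or_eq_otherWire {j r z : ℕ} (hr : NodeOnWire w j r) (hz : NodeOnWire w j z) :
    z = r ∨ z = otherWire w j r := by
  unfold NodeOnWire at hr hz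
  unfold otherWire
  split_ifs <;> omega

lemma nodeOnWire_otherWire (w : List ℕ) (j r : ℕ) : NodeOnWire w j (otherWire w j r) := by
  unfold otherWire
  split_ifs
  · exact Or.inr rfl
  · exact Or.inl rfl

lemma otherWire_otherWire {r : ℕ} (hr : NodeOnWire w (h + 1) r) :
    otherWire w (h + 1) (otherWire w (h + 1) r) = r := by
  have := wireX_ne_wireY w h
  unfold NodeOnWire at hr
  unfold otherWire
  split_ifs <;> omega

lemma otherWire_ne (w : List ℕ) (h r : ℕ) : otherWire w (h + 1) r ≠ r := by
  have := wireX_ne_wireY w h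
  unfold otherWire
  split_ifs <;> omega

lemma wireCol_succ_of_nodeOnWire (hh : h < w.length) {r : ℕ} (hr : NodeOnWire w (h + 1) r) :
    wireCol w (h + 1) r = letterAt w (h + 1) ∨ wireCol w (h + 1) r = letterAt w (h + 1) + 1 := by
  rcases hr with rfl | rfl
  exacts [Or.inr (wireCol_succ_wireX hh), Or.inl (wireCol_succ_wireY hh)]

lemma otherWire_of_wireX_eq {j r : ℕ} (hr : wireX w j = r) : otherWire w j r = wireY w j := by
  rw [otherWire, if_pos hr]

lemma otherWire_of_wireY_eq {r : ℕ} (hr : wireY w (h + 1) = r) :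
    otherWire w (h + 1) r = wireX w (h + 1) := by
  rw [otherWire, if_neg (hr ▸ wireX_ne_wireY w h)]

lemma wireCol_succ_otherWire (hh : h < w.length) {r : ℕ} (hr : NodeOnWire w (h + 1) r) :
    wireCol w (h + 1) (otherWire w (h + 1) r) = wireCol w h r := by
  unfold otherWire
  rcases hr with rfl | rfl
  · rw [if_pos rfl, wireCol_succ_wireY hh, wireCol_wireX]
  · rw [if_neg (wireX_ne_wireY w h), wireCol_succ_wireX hh, wireCol_wireY]

lemma crossed_wireX_wireY_succ (hh : h < w.length) :
    Crossed w (h + 1) (wireX w (h + 1)) (wireY w (h + 1)) := by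
  unfold Crossed
  rw [wireCol_succ_wireX hh, wireCol_succ_wireY hh]
  omega

lemma crossed_succ_iff_of_not_both (hh : h < w.length) {x y : ℕ}
    (hxy : ¬ (NodeOnWire w (h + 1) x ∧ NodeOnWire w (h + 1) y)) :
    Crossed w (h + 1) x y ↔ Crossed w h x y := by
  unfold Crossed
  rw [wireCol_succ hh, wireCol_succ hh]
  rw [nodeOnWire_iff_wireCol, nodeOnWire_iff_wireCol] at hxy
  exact sTrans_lt_sTrans_iff (by omega) (by omega)

lemma not_crossed_iff {x y : ℕ} (hxy : x ≠ y) :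
    ¬ Crossed w h x y ↔ wireCol w h x < wireCol w h y := by
  rw [Crossed, not_lt, le_iff_lt_or_eq, or_iff_left ((wireCol_injective w h).ne hxy)]

lemma wireX_wireY_of_wireCol_lt {x y : ℕ} (hx : NodeOnWire w (h + 1) x)
    (hy : NodeOnWire w (h + 1) y) (hlt : wireCol w h x < wireCol w h y) :
    wireX w (h + 1) = x ∧ wireY w (h + 1) = y := by
  have := wireCol_wireX w h
  have := wireCol_wireY w h
  rcases hx with rfl | rfl <;> rcases hy with rfl | rfl <;> omega

end Columns

/-! ### Reduced words -/

lemma two_mul_card_lt_pairs (m : ℕ) :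
    2 * ((Finset.Icc 1 m ×ˢ Finset.Icc 1 m).filter fun p : ℕ × ℕ => p.1 < p.2).card =
      m * (m - 1) := by
  have hsplit := Finset.card_filter_add_card_filter_not (s := (Finset.Icc 1 m).offDiag)
    (fun p : ℕ × ℕ => p.1 < p.2)
  have hlt : ((Finset.Icc 1 m).offDiag.filter fun p : ℕ × ℕ => p.1 < p.2) =
      (Finset.Icc 1 m ×ˢ Finset.Icc 1 m).filter fun p : ℕ × ℕ => p.1 < p.2 := by
    ext p
    simp only [Finset.mem_filter, Finset.mem_offDiag, Finset.mem_product, Finset.mem_Icc]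
    omega
  have hgt : ((Finset.Icc 1 m).offDiag.filter fun p : ℕ × ℕ => ¬ p.1 < p.2) =
      ((Finset.Icc 1 m ×ˢ Finset.Icc 1 m).filter fun p : ℕ × ℕ => p.1 < p.2).map
        (Equiv.prodComm ℕ ℕ).toEmbedding := by
    ext ⟨x, y⟩
    simp only [Finset.mem_filter, Finset.mem_offDiag, Finset.mem_product, Finset.mem_Icc,
      Finset.mem_map_equiv, Equiv.prodComm_symm, Equiv.prodComm_apply, Prod.swap_prod_mk]
    omega
  rw [hlt, hgt, Finset.card_map, Finset.offDiag_card, Nat.card_Icc, Nat.add_sub_cancel] at hsplit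
  rw [Nat.mul_sub_one]
  omega

lemma le_add_sub_of_succ_le {f : ℕ → ℕ} {a b : ℕ} (hab : a ≤ b)
    (hf : ∀ g, a ≤ g → g < b → f (g + 1) ≤ f g + 1) : f b ≤ f a + (b - a) := by
  induction b, hab using Nat.le_induction with
  | base => simp
  | succ b hab ih =>
      have := hf b hab (by omega)
      have := ih fun g hg hgb => hf g hg (by omega)
      omega

def crossedPairs (n : ℕ) (w : List ℕ) (h : ℕ) : Finset (ℕ × ℕ) :=
  (Finset.Icc 1 (n + 1) ×ˢ Finset.Icc 1 (n + 1)).filter fun p => p.1 < p.2 ∧ Crossed w h p.1 p.2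

section Reduced

variable {n : ℕ} {w : List ℕ} {h : ℕ}

lemma crossedPairs_zero (n : ℕ) (w : List ℕ) : crossedPairs n w 0 = ∅ := by
  rw [crossedPairs, Finset.filter_eq_empty_iff]
  simp only [Crossed, wireCol_zero]
  omega

lemma crossed_length (hw : IsReduced n w) {x y : ℕ} (hx : 1 ≤ x) (hxy : x < y) (hy : y ≤ n + 1) :
    Crossed w w.length x y := by
  have hw0 : ∀ r, wireCol w w.length r = longestPerm n r := fun r => by
    rw [wireCol, stateBelow, List.take_length, hw.2.2]
    rfl
  have hlong : ∀ r, longestPerm n r = if 1 ≤ r ∧ r ≤ n + 1 then n + 2 - r else r := fun r => rfl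
  rw [Crossed, hw0, hw0, hlong, hlong]
  split_ifs <;> omega

lemma card_crossedPairs_length (hw : IsReduced n w) :
    (crossedPairs n w w.length).card = w.length := by
  have hall : crossedPairs n w w.length =
      (Finset.Icc 1 (n + 1) ×ˢ Finset.Icc 1 (n + 1)).filter fun p : ℕ × ℕ => p.1 < p.2 := by
    refine Finset.filter_congr fun p hp => ?_
    simp only [Finset.mem_product, Finset.mem_Icc] at hp
    exact ⟨fun h => h.1, fun h => ⟨h, crossed_length hw hp.1.1 h hp.2.2⟩⟩
  have := two_mul_card_lt_pairs (n + 1)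
  rw [Nat.add_sub_cancel, Nat.mul_comm (n + 1) n] at this
  rw [hall, hw.1]
  omega

lemma mem_crossedPairs_of_mem_succ (hh : h < w.length) {p : ℕ × ℕ}
    (hp : p ∈ crossedPairs n w (h + 1)) (hpXY : p ≠ (wireX w (h + 1), wireY w (h + 1))) :
    p ∈ crossedPairs n w h := by
  simp only [crossedPairs, Finset.mem_filter] at hp ⊢
  refine ⟨hp.1, hp.2.1, ?_⟩
  by_cases hboth : NodeOnWire w (h + 1) p.1 ∧ NodeOnWire w (h + 1) p.2
  · exfalso
    obtain ⟨h1 | h1, h2 | h2⟩ := hboth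
    · omega
    · exact hpXY (Prod.ext h1.symm h2.symm)
    · rw [← h1, ← h2] at hp
      exact lt_asymm hp.2.2 (crossed_wireX_wireY_succ hh)
    · omega
  · exact (crossed_succ_iff_of_not_both hh hboth).mp hp.2.2

lemma card_crossedPairs_succ_le (hh : h < w.length) :
    (crossedPairs n w (h + 1)).card ≤ (crossedPairs n w h).card + 1 := by
  refine (Finset.card_le_card fun p hp => ?_).trans (Finset.card_insert_le
    (wireX w (h + 1), wireY w (h + 1)) _)
  by_cases hpXY : p = (wireX w (h + 1), wireY w (h + 1))
  · exact hpXY ▸ Finset.mem_insert_self _ _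
  · exact Finset.mem_insert_of_mem (mem_crossedPairs_of_mem_succ hh hp hpXY)

lemma card_crossedPairs_succ_le_of_lt (hh : h < w.length)
    (hYX : wireY w (h + 1) < wireX w (h + 1)) :
    (crossedPairs n w (h + 1)).card ≤ (crossedPairs n w h).card := by
  refine Finset.card_le_card fun p hp => mem_crossedPairs_of_mem_succ hh hp ?_
  rintro rfl
  simp only [crossedPairs, Finset.mem_filter] at hp
  omega

/-- Crossing numbers grow by at most one per node and reach the length of the word at the
bottom, so they grow at every node. -/
lemma wireX_lt_wireY (hw : IsReduced n w) (hh : h < w.length) :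
    wireX w (h + 1) < wireY w (h + 1) := by
  by_contra hle
  have hYX : wireY w (h + 1) < wireX w (h + 1) :=
    lt_of_le_of_ne (not_lt.mp hle) (wireX_ne_wireY w h).symm
  have h1 := le_add_sub_of_succ_le (f := fun g => (crossedPairs n w g).card) (Nat.zero_le h)
    fun g _ hg => card_crossedPairs_succ_le (by omega)
  have h2 := le_add_sub_of_succ_le (f := fun g => (crossedPairs n w g).card)
    (by omega : h + 1 ≤ w.length) fun g _ hg => card_crossedPairs_succ_le hg
  have h3 := card_crossedPairs_succ_le_of_lt (n := n) hh hYX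
  simp only [crossedPairs_zero, Finset.card_empty, card_crossedPairs_length hw] at h1 h2
  omega

lemma not_crossed_of_nodeOnWire (hw : IsReduced n w) (hh : h < w.length) {x y : ℕ}
    (hxy : x < y) (hx : NodeOnWire w (h + 1) x) (hy : NodeOnWire w (h + 1) y) :
    ¬ Crossed w h x y := fun hc => by
  have := wireX_lt_wireY hw hh
  have := wireX_wireY_of_wireCol_lt hy hx hc
  omega

lemma crossed_succ_of_nodeOnWire (hw : IsReduced n w) (hh : h < w.length) {x y : ℕ}
    (hxy : x < y) (hx : NodeOnWire w (h + 1) x) (hy : NodeOnWire w (h + 1) y) :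
    Crossed w (h + 1) x y := by
  have := wireX_lt_wireY hw hh
  obtain ⟨rfl, rfl⟩ : wireX w (h + 1) = x ∧ wireY w (h + 1) = y := by
    rcases hx with hx | hx <;> rcases hy with hy | hy <;> omega
  exact crossed_wireX_wireY_succ hh

end Reduced

section NodeLists

variable {w : List ℕ}

lemma mem_nodesOn {r j : ℕ} : j ∈ nodesOn w r ↔ 1 ≤ j ∧ j ≤ w.length ∧ NodeOnWire w j r := by
  simp only [nodesOn, List.mem_filter, List.mem_map, List.mem_range, decide_eq_true_eq]
  constructor
  · rintro ⟨⟨i, hi, rfl⟩, hr⟩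
    exact ⟨by omega, by omega, hr⟩
  · rintro ⟨h1, h2, hr⟩
    exact ⟨⟨j - 1, by omega, by omega⟩, hr⟩

lemma nodesOn_pairwise_lt (w : List ℕ) (r : ℕ) : (nodesOn w r).Pairwise (· < ·) :=
  ((List.pairwise_lt_range (n := w.length)).map (· + 1)
    fun _ _ h => Nat.add_lt_add_right h 1).filter _

lemma nodesOn_nodup (w : List ℕ) (r : ℕ) : (nodesOn w r).Nodup :=
  (nodesOn_pairwise_lt w r).imp Nat.ne_of_lt

lemma mem_segList {r a b j : ℕ} :
    j ∈ segList w r a b ↔ j ∈ nodesOn w r ∧ min a b < j ∧ j < max a b := by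
  rw [segList, List.mem_filter, decide_eq_true_eq]

lemma mem_tailList {r a j : ℕ} : j ∈ tailList w r a ↔ j ∈ nodesOn w r ∧ a < j := by
  rw [tailList, List.mem_filter, decide_eq_true_eq]

lemma tailList_nodup (w : List ℕ) (r a : ℕ) : (tailList w r a).Nodup :=
  (nodesOn_nodup w r).filter _

lemma segList_nodup (w : List ℕ) (r a b : ℕ) : (segList w r a b).Nodup :=
  (nodesOn_nodup w r).filter _

lemma mem_segList_of_lt {r a b j : ℕ} (hab : a < b) :
    j ∈ segList w r a b ↔ j ∈ nodesOn w r ∧ a < j ∧ j < b := by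
  rw [mem_segList, min_eq_left hab.le, max_eq_right hab.le]

lemma mem_segList_of_gt {r a b j : ℕ} (hba : b < a) :
    j ∈ segList w r a b ↔ j ∈ nodesOn w r ∧ b < j ∧ j < a := by
  rw [mem_segList, min_eq_right hba.le, max_eq_left hba.le]

end NodeLists

lemma nodup_append_cons_of_lt {L R : List ℕ} {m : ℕ} (hL : L.Nodup) (hR : R.Nodup)
    (hLm : ∀ j ∈ L, j < m) (hRm : ∀ j ∈ R, m < j) : (L ++ m :: R).Nodup :=
  hL.append (List.nodup_cons.mpr ⟨fun hm => (hRm m hm).false, hR⟩) fun j hjL hjR => by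
    have := hLm j hjL
    rcases List.mem_cons.mp hjR with rfl | hjR
    · omega
    · have := hRm j hjR
      omega

lemma nodup_append_cons_of_gt {L R : List ℕ} {m : ℕ} (hL : L.Nodup) (hR : R.Nodup)
    (hLm : ∀ j ∈ L, m < j) (hRm : ∀ j ∈ R, j < m) : (L ++ m :: R).Nodup :=
  hL.append (List.nodup_cons.mpr ⟨fun hm => (hRm m hm).false, hR⟩) fun j hjL hjR => by
    have := hLm j hjL
    rcases List.mem_cons.mp hjR with rfl | hjR
    · omega
    · have := hRm j hjR
      omega

lemma eq_false_of_find?_eq_some_of_lt {p : ℕ → Bool} {l : List ℕ} {m : ℕ}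
    (hl : l.Pairwise (· < ·)) (hf : l.find? p = some m) {x : ℕ} (hx : x ∈ l) (hxm : x < m) :
    p x = false := by
  obtain ⟨-, as, bs, rfl, has⟩ := List.find?_eq_some_iff_append.mp hf
  rcases List.mem_append.mp hx with hx | hx
  · simpa using has x hx
  · rcases List.mem_cons.mp hx with rfl | hx
    · omega
    · have := List.rel_of_pairwise_cons (List.pairwise_append.mp hl).2.1 hx
      omega

/-! ### Greedy walks

A greedy walk travels down the diagram (towards larger node indices) and switches wires at
the first node where the trigger `T current other` fires.  Its `fuel` bounds the number of
switches; `w.length + 1` is always enough. -/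

/-- The next switching node of the greedy walk on wire `ℓ_u` below node `t_a`. -/
def nextSwitch (w : List ℕ) (T : ℕ → ℕ → Bool) (u a : ℕ) : Option ℕ :=
  (nodesOn w u).find? fun j => a < j && T u (otherWire w j u)

/-- The switching nodes of the greedy walk, each with the wire it switches to. -/
def greedySwitches (w : List ℕ) (T : ℕ → ℕ → Bool) : ℕ → ℕ → ℕ → List (ℕ × ℕ)
  | 0, _, _ => []
  | fuel + 1, u, a =>
      match nextSwitch w T u a with
      | none => []
      | some m => (m, otherWire w m u) :: greedySwitches w T fuel (otherWire w m u) m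

def greedyEnd (w : List ℕ) (T : ℕ → ℕ → Bool) : ℕ → ℕ → ℕ → ℕ
  | 0, u, _ => u
  | fuel + 1, u, a =>
      match nextSwitch w T u a with
      | none => u
      | some m => greedyEnd w T fuel (otherWire w m u) m

/-- The wire of the greedy walk at level `h`, i.e. just below node `t_h`. -/
def greedyWire (w : List ℕ) (T : ℕ → ℕ → Bool) : ℕ → ℕ → ℕ → ℕ → ℕ
  | 0, u, _, _ => u
  | fuel + 1, u, a, h =>
      match nextSwitch w T u a with
      | none => u
      | some m => if h < m then u else greedyWire w T fuel (otherWire w m u) m h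

section Greedy

variable {w : List ℕ} {T : ℕ → ℕ → Bool}

lemma nextSwitch_spec {u a m : ℕ} (hm : nextSwitch w T u a = some m) :
    (1 ≤ m ∧ m ≤ w.length ∧ NodeOnWire w m u) ∧ a < m ∧ T u (otherWire w m u) = true := by
  have h := List.find?_some hm
  rw [Bool.and_eq_true, decide_eq_true_eq] at h
  exact ⟨mem_nodesOn.mp (List.mem_of_find?_eq_some hm), h⟩

lemma trigger_false_of_lt_nextSwitch {u a m : ℕ} (hm : nextSwitch w T u a = some m) {j : ℕ}
    (hj : j ∈ nodesOn w u) (haj : a < j) (hjm : j < m) : T u (otherWire w j u) = false := by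
  have := eq_false_of_find?_eq_some_of_lt (nodesOn_pairwise_lt w u) hm hj hjm
  simpa [haj] using this

lemma trigger_false_of_nextSwitch_eq_none {u a : ℕ} (hm : nextSwitch w T u a = none) {j : ℕ}
    (hj : j ∈ nodesOn w u) (haj : a < j) : T u (otherWire w j u) = false := by
  have := List.find?_eq_none.mp hm j hj
  simpa [haj] using this

lemma greedyWire_of_lt {fuel u a h : ℕ} (hh : ∀ m, nextSwitch w T u a = some m → h < m) :
    greedyWire w T fuel u a h = u := by
  cases fuel with
  | zero => rfl
  | succ fuel =>
      cases hm : nextSwitch w T u a with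
      | none => simp only [greedyWire, hm]
      | some m => simp only [greedyWire, hm, if_pos (hh m hm)]

lemma greedyWire_self (fuel u a : ℕ) : greedyWire w T fuel u a a = u :=
  greedyWire_of_lt fun _ hm => (nextSwitch_spec hm).2.1

lemma greedyWire_of_nextSwitch_eq_none {fuel u a h : ℕ} (hm : nextSwitch w T u a = none) :
    greedyWire w T fuel u a h = u :=
  greedyWire_of_lt fun _ hm' => by simp [hm] at hm'

lemma greedyWire_succ_of_le {fuel u a m h : ℕ} (hm : nextSwitch w T u a = some m) (hmh : m ≤ h) :
    greedyWire w T (fuel + 1) u a h = greedyWire w T fuel (otherWire w m u) m h := by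
  simp only [greedyWire, hm, if_neg (not_lt.mpr hmh)]

lemma greedyWire_succ_of_lt {fuel u a m h : ℕ} (hm : nextSwitch w T u a = some m) (hhm : h < m) :
    greedyWire w T (fuel + 1) u a h = u := by
  simp only [greedyWire, hm, if_pos hhm]

lemma greedyEnd_succ_of_some {fuel u a m : ℕ} (hm : nextSwitch w T u a = some m) :
    greedyEnd w T (fuel + 1) u a = greedyEnd w T fuel (otherWire w m u) m := by
  simp only [greedyEnd, hm]

lemma greedyEnd_succ_of_none {fuel u a : ℕ} (hm : nextSwitch w T u a = none) :
    greedyEnd w T (fuel + 1) u a = u := by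
  simp only [greedyEnd, hm]

lemma greedyWire_of_length_le {fuel u a h : ℕ} (hh : w.length ≤ h) :
    greedyWire w T fuel u a h = greedyEnd w T fuel u a := by
  induction fuel generalizing u a with
  | zero => rfl
  | succ fuel ih =>
      cases hm : nextSwitch w T u a with
      | none => simp only [greedyWire, greedyEnd, hm]
      | some m =>
          rw [greedyWire_succ_of_le hm (by have := nextSwitch_spec hm; omega),
            greedyEnd_succ_of_some hm, ih]

lemma greedyWire_succ {fuel u a h : ℕ} (hfuel : w.length < a + fuel) (hah : a ≤ h) :
    greedyWire w T fuel u a (h + 1) = greedyWire w T fuel u a h ∨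
      (h + 1 ≤ w.length ∧ NodeOnWire w (h + 1) (greedyWire w T fuel u a h) ∧
        greedyWire w T fuel u a (h + 1) = otherWire w (h + 1) (greedyWire w T fuel u a h) ∧
        T (greedyWire w T fuel u a h) (greedyWire w T fuel u a (h + 1)) = true) := by
  induction fuel generalizing u a with
  | zero => exact Or.inl rfl
  | succ fuel ih =>
      cases hm : nextSwitch w T u a with
      | none => simp only [greedyWire_of_nextSwitch_eq_none hm, true_or]
      | some m =>
          obtain ⟨⟨-, hm2, hm3⟩, ham, hT⟩ := nextSwitch_spec hm
          rcases Nat.lt_trichotomy (h + 1) m with hc | rfl | hc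
          · left
            rw [greedyWire_succ_of_lt hm hc, greedyWire_succ_of_lt hm (by omega)]
          · right
            rw [greedyWire_succ_of_le hm le_rfl, greedyWire_self, greedyWire_succ_of_lt hm
              (by omega)]
            exact ⟨hm2, hm3, rfl, hT⟩
          · rw [greedyWire_succ_of_le hm (by omega), greedyWire_succ_of_le hm (by omega)]
            exact ih (by omega) (by omega)

lemma trigger_false_of_greedyWire_succ {fuel u a h : ℕ} (hfuel : w.length < a + fuel)
    (hah : a ≤ h) (hh : h + 1 ≤ w.length)
    (heq : greedyWire w T fuel u a (h + 1) = greedyWire w T fuel u a h)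
    (hon : NodeOnWire w (h + 1) (greedyWire w T fuel u a h)) :
    T (greedyWire w T fuel u a h) (otherWire w (h + 1) (greedyWire w T fuel u a h)) = false := by
  induction fuel generalizing u a with
  | zero => omega
  | succ fuel ih =>
      cases hm : nextSwitch w T u a with
      | none =>
          rw [greedyWire_of_nextSwitch_eq_none hm] at hon ⊢
          exact trigger_false_of_nextSwitch_eq_none hm (mem_nodesOn.mpr ⟨by omega, hh, hon⟩)
            (by omega)
      | some m =>
          obtain ⟨⟨-, -, hm3⟩, ham, -⟩ := nextSwitch_spec hm
          rcases Nat.lt_trichotomy (h + 1) m with hc | rfl | hc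
          · rw [greedyWire_succ_of_lt hm (by omega)] at hon ⊢
            exact trigger_false_of_lt_nextSwitch hm (mem_nodesOn.mpr ⟨by omega, hh, hon⟩)
              (by omega) hc
          · rw [greedyWire_succ_of_le hm le_rfl, greedyWire_self,
              greedyWire_succ_of_lt hm (by omega)] at heq
            exact absurd heq (otherWire_ne w h u)
          · rw [greedyWire_succ_of_le hm (by omega), greedyWire_succ_of_le hm (by omega)] at heq
            rw [greedyWire_succ_of_le hm (by omega)] at hon ⊢
            exact ih (by omega) (by omega) heq hon

lemma greedyEnd_induction (P : ℕ → Prop) (hT : ∀ u x, T u x = true → P x) {fuel u a : ℕ}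
    (hu : P u) : P (greedyEnd w T fuel u a) := by
  induction fuel generalizing u a with
  | zero => exact hu
  | succ fuel ih =>
      cases hm : nextSwitch w T u a with
      | none => rwa [greedyEnd_succ_of_none hm]
      | some m => exact greedyEnd_succ_of_some hm ▸ ih (hT _ _ (nextSwitch_spec hm).2.2)

lemma greedyWire_mem_Icc_of_lt (hT : ∀ u x, T u x = true → u < x) {fuel u a h : ℕ} :
    u ≤ greedyWire w T fuel u a h ∧ greedyWire w T fuel u a h ≤ greedyEnd w T fuel u a := by
  induction fuel generalizing u a with
  | zero => exact ⟨le_rfl, le_rfl⟩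
  | succ fuel ih =>
      cases hm : nextSwitch w T u a with
      | none => simp only [greedyWire, greedyEnd, hm, le_rfl, and_self]
      | some m =>
          have hux := hT _ _ (nextSwitch_spec hm).2.2
          have := ih (u := otherWire w m u) (a := m)
          rw [greedyEnd_succ_of_some hm]
          by_cases hc : h < m
          · rw [greedyWire_succ_of_lt hm hc]; omega
          · rw [greedyWire_succ_of_le hm (by omega)]; omega

lemma greedyWire_mem_Icc_of_gt (hT : ∀ u x, T u x = true → x < u) {fuel u a h : ℕ} :
    greedyEnd w T fuel u a ≤ greedyWire w T fuel u a h ∧ greedyWire w T fuel u a h ≤ u := by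
  induction fuel generalizing u a with
  | zero => exact ⟨le_rfl, le_rfl⟩
  | succ fuel ih =>
      cases hm : nextSwitch w T u a with
      | none => simp only [greedyWire, greedyEnd, hm, le_rfl, and_self]
      | some m =>
          have hux := hT _ _ (nextSwitch_spec hm).2.2
          have := ih (u := otherWire w m u) (a := m)
          rw [greedyEnd_succ_of_some hm]
          by_cases hc : h < m
          · rw [greedyWire_succ_of_lt hm hc]; omega
          · rw [greedyWire_succ_of_le hm (by omega)]; omega

lemma isChain_greedySwitches (R : ℕ → ℕ → Prop) (hT : ∀ u x, T u x = true → R u x)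
    (fuel u a : ℕ) : List.IsChain R (u :: (greedySwitches w T fuel u a).map Prod.snd) := by
  induction fuel generalizing u a with
  | zero => exact List.IsChain.singleton _
  | succ fuel ih =>
      cases hm : nextSwitch w T u a with
      | none => simp only [greedySwitches, hm, List.map_nil]; exact List.IsChain.singleton _
      | some m =>
          simp only [greedySwitches, hm, List.map_cons]
          exact List.IsChain.cons_cons (hT _ _ (nextSwitch_spec hm).2.2) (ih _ _)

lemma wireSeq_greedySwitches (fuel v b : ℕ) :
    wireSeq w v ((greedySwitches w T fuel v b).map Prod.fst) =
      v :: (greedySwitches w T fuel v b).map Prod.snd := by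
  induction fuel generalizing v b with
  | zero => rfl
  | succ fuel ih =>
      cases hm : nextSwitch w T v b with
      | none => simp only [greedySwitches, hm, List.map_nil]; rfl
      | some m =>
          simp only [greedySwitches, hm, List.map_cons]
          exact congrArg (v :: ·) (ih _ _)

lemma mem_pathSwitches_greedySwitches (P : ℕ → Prop) (hT : ∀ u x, T u x = true → P x)
    {fuel v b : ℕ} (hv : P v) :
    ∀ e ∈ pathSwitches w v ((greedySwitches w T fuel v b).map Prod.fst), P e.2.1 ∧ P e.2.2 := by
  induction fuel generalizing v b with
  | zero => simp [greedySwitches, pathSwitches]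
  | succ fuel ih =>
      cases hm : nextSwitch w T v b with
      | none => simp [greedySwitches, hm, pathSwitches]
      | some m =>
          have hx := hT _ _ (nextSwitch_spec hm).2.2
          simp only [greedySwitches, hm, List.map_cons, pathSwitches, List.mem_cons,
            forall_eq_or_imp]
          exact ⟨⟨hv, hx⟩, ih hx⟩

lemma le_greedyEnd (hT : ∀ u x, T u x = true → u < x) (fuel u a : ℕ) :
    u ≤ greedyEnd w T fuel u a :=
  let ⟨h₁, h₂⟩ := greedyWire_mem_Icc_of_lt (w := w) hT (fuel := fuel) (u := u) (a := a) (h := a)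
  h₁.trans h₂

lemma visitTail_greedySwitches (fuel v b : ℕ) :
    (visitTail w v b ((greedySwitches w T fuel v b).map Prod.fst)).Nodup ∧
    ∀ j ∈ visitTail w v b ((greedySwitches w T fuel v b).map Prod.fst),
      b < j ∧ j ≤ w.length ∧ NodeOnWire w j (greedyWire w T fuel v b j) := by
  induction fuel generalizing v b with
  | zero =>
      refine ⟨tailList_nodup w v b, fun j hj => ?_⟩
      obtain ⟨hj, hbj⟩ := mem_tailList.mp hj
      exact ⟨hbj, (mem_nodesOn.mp hj).2⟩
  | succ fuel ih =>
      cases hm : nextSwitch w T v b with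
      | none =>
          simp only [greedySwitches, hm, List.map_nil, visitTail]
          refine ⟨tailList_nodup w v b, fun j hj => ?_⟩
          obtain ⟨hj, hbj⟩ := mem_tailList.mp hj
          rw [greedyWire_of_nextSwitch_eq_none hm]
          exact ⟨hbj, (mem_nodesOn.mp hj).2⟩
      | some m =>
          obtain ⟨⟨-, hm2, -⟩, hbm, -⟩ := nextSwitch_spec hm
          obtain ⟨ihn, ihm⟩ := ih (otherWire w m v) m
          simp only [greedySwitches, hm, List.map_cons, visitTail]
          refine ⟨nodup_append_cons_of_lt (segList_nodup w v b m) ihn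
            (fun j hj => ((mem_segList_of_lt hbm).mp hj).2.2) (fun j hj => (ihm j hj).1),
            fun j hj => ?_⟩
          rcases List.mem_append.mp hj with hj | hj
          · obtain ⟨hjv, hbj, hjm⟩ := (mem_segList_of_lt hbm).mp hj
            rw [greedyWire_succ_of_lt hm hjm]
            exact ⟨hbj, (mem_nodesOn.mp hjv).2⟩
          rcases List.mem_cons.mp hj with rfl | hj
          · rw [greedyWire_succ_of_le hm le_rfl, greedyWire_self]
            exact ⟨hbm, hm2, nodeOnWire_otherWire w j v⟩
          · obtain ⟨hmj, hj2, hj3⟩ := ihm j hj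
            rw [greedyWire_succ_of_le hm hmj.le]
            exact ⟨by omega, hj2, hj3⟩

lemma greedySwitches_reverse_append {fuel u a m : ℕ} (hm : nextSwitch w T u a = some m)
    (L : List ℕ) :
    (greedySwitches w T (fuel + 1) u a).reverse.map Prod.fst ++ L =
      (greedySwitches w T fuel (otherWire w m u) m).reverse.map Prod.fst ++ m :: L := by
  simp [greedySwitches, hm]

end Greedy

def ascTrigger (n u x : ℕ) : Bool := decide (u < x ∧ x ≤ n)

def descTrigger (α v x : ℕ) : Bool := decide (α < x ∧ x < v)

lemma ascTrigger_eq_true {n u x : ℕ} : ascTrigger n u x = true ↔ u < x ∧ x ≤ n :=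
  decide_eq_true_iff

lemma descTrigger_eq_true {α v x : ℕ} : descTrigger α v x = true ↔ α < x ∧ x < v :=
  decide_eq_true_iff

lemma ascTrigger_eq_false {n u x : ℕ} : ascTrigger n u x = false ↔ ¬ (u < x ∧ x ≤ n) :=
  decide_eq_false_iff_not

lemma descTrigger_eq_false {α v x : ℕ} : descTrigger α v x = false ↔ ¬ (α < x ∧ x < v) :=
  decide_eq_false_iff_not

lemma ascTrigger_lt {n u x : ℕ} (h : ascTrigger n u x = true) : u < x :=
  (ascTrigger_eq_true.mp h).1

lemma descTrigger_lt {α v x : ℕ} (h : descTrigger α v x = true) : x < v :=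
  (descTrigger_eq_true.mp h).2

/-- The start of a rigorous path in `G(i, k)`, as in `IsGPPath`. -/
def TravelOKFromBottom (w : List ℕ) (k : ℕ) : List ℕ → Prop
  | [] => False
  | m :: rest => ValidNode w m ∧ NodeOnWire w m k ∧ (∀ j ∈ tailList w k m, ¬ Forbidden w k j k) ∧
      TravelOK w k (otherWire w m k) m rest

lemma isGPPath_iff {n : ℕ} {w : List ℕ} {k : ℕ} {ms : List ℕ} :
    IsGPPath n w k ms ↔
      1 ≤ k ∧ k ≤ n ∧ TravelOKFromBottom w k ms ∧ (visitList w k ms).Nodup := by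
  cases ms <;> rfl

section Legality

variable {w : List ℕ}

/-- Going down a wire `ℓ_v` with `v > α` in `G(i, α)`, passing straight through a node is
forbidden exactly when the descending trigger fires there, so the descending walk is legal. -/
lemma travelOK_descWalk {α fuel v b : ℕ} (hv : α < v)
    (hend : greedyEnd w (descTrigger α) fuel v b = α + 1) :
    TravelOK w α v b ((greedySwitches w (descTrigger α) fuel v b).map Prod.fst) := by
  have hstop : ∀ b, TravelOK w α (α + 1) b [] := fun _ =>
    ⟨rfl, fun _ _ => by unfold Forbidden; omega⟩
  induction fuel generalizing v b with
  | zero =>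
      obtain rfl : v = α + 1 := hend
      exact hstop b
  | succ fuel ih =>
      cases hm : nextSwitch w (descTrigger α) v b with
      | none =>
          obtain rfl : v = α + 1 := by rw [← hend, greedyEnd_succ_of_none hm]
          simpa only [greedySwitches, hm, List.map_nil] using hstop b
      | some m =>
          obtain ⟨⟨hm1, hm2, hm3⟩, hbm, hT⟩ := nextSwitch_spec hm
          rw [descTrigger_eq_true] at hT
          simp only [greedySwitches, hm, List.map_cons]
          refine ⟨⟨hm1, hm2⟩, hm3, by rw [if_neg (by omega)]; exact hbm, fun j hj => ?_,
            ih (by omega) (by rw [← greedyEnd_succ_of_some hm]; exact hend)⟩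
          obtain ⟨hjv, hbj, hjm⟩ := (mem_segList_of_lt hbm).mp hj
          have := trigger_false_of_lt_nextSwitch hm hjv hbj hjm
          rw [descTrigger_eq_false] at this
          unfold Forbidden
          omega

variable {n α : ℕ}

lemma travelOKFromBottom_ascWalk (hα : α ≤ n) {fuel u a : ℕ} (ha : ValidNode w a)
    (hon : NodeOnWire w a u) (hend : greedyEnd w (ascTrigger n) fuel u a = α) {cont : List ℕ}
    (hcont : TravelOK w α (otherWire w a u) a cont) :
    TravelOKFromBottom w α
      ((greedySwitches w (ascTrigger n) fuel u a).reverse.map Prod.fst ++ a :: cont) := by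
  induction fuel generalizing u a cont with
  | zero =>
      obtain rfl : u = α := hend
      exact ⟨ha, hon, fun j _ => by unfold Forbidden; omega, hcont⟩
  | succ fuel ih =>
      cases hm : nextSwitch w (ascTrigger n) u a with
      | none =>
          obtain rfl : u = α := by rw [← hend, greedyEnd_succ_of_none hm]
          simp only [greedySwitches, hm]
          exact ⟨ha, hon, fun j _ => by unfold Forbidden; omega, hcont⟩
      | some m =>
          obtain ⟨⟨hm1, hm2, hm3⟩, ham, -⟩ := nextSwitch_spec hm
          obtain ⟨m', rfl⟩ : ∃ m', m = m' + 1 := ⟨m - 1, by omega⟩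
          have hu : u ≤ α := hend ▸ le_greedyEnd (fun _ _ => ascTrigger_lt) _ u a
          have hstep : TravelOK w α u (m' + 1) (a :: cont) := by
            refine ⟨ha, hon, by rw [if_pos hu]; exact ham, fun j hj => ?_, hcont⟩
            obtain ⟨hjv, haj, hjm⟩ := (mem_segList_of_gt ham).mp hj
            have := trigger_false_of_lt_nextSwitch hm hjv haj hjm
            rw [ascTrigger_eq_false] at this
            unfold Forbidden
            omega
          rw [greedySwitches_reverse_append hm]
          exact ih ⟨hm1, hm2⟩ (nodeOnWire_otherWire w _ u)
            (by rw [← greedyEnd_succ_of_some hm]; exact hend)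
            (by rwa [otherWire_otherWire hm3])

lemma visitList_ascWalk {fuel u a : ℕ} (hon : NodeOnWire w a u)
    (hend : greedyEnd w (ascTrigger n) fuel u a = α) (cont : List ℕ) :
    ∃ V, visitList w α
        ((greedySwitches w (ascTrigger n) fuel u a).reverse.map Prod.fst ++ a :: cont) =
          V ++ a :: visitTail w (otherWire w a u) a cont ∧ V.Nodup ∧
      ∀ j ∈ V, a < j ∧ j ≤ w.length ∧
        NodeOnWire w j (greedyWire w (ascTrigger n) fuel u a j) := by
  induction fuel generalizing u a cont with
  | zero =>
      obtain rfl : u = α := hend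
      refine ⟨tailList w u a, rfl, tailList_nodup w u a, fun j hj => ?_⟩
      obtain ⟨hj, haj⟩ := mem_tailList.mp hj
      exact ⟨haj, (mem_nodesOn.mp hj).2⟩
  | succ fuel ih =>
      cases hm : nextSwitch w (ascTrigger n) u a with
      | none =>
          obtain rfl : u = α := by rw [← hend, greedyEnd_succ_of_none hm]
          refine ⟨tailList w u a, by simp [greedySwitches, hm, visitList],
            tailList_nodup w u a, fun j hj => ?_⟩
          obtain ⟨hj, haj⟩ := mem_tailList.mp hj
          rw [greedyWire_of_nextSwitch_eq_none hm]
          exact ⟨haj, (mem_nodesOn.mp hj).2⟩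
      | some m =>
          obtain ⟨⟨hm1, hm2, hm3⟩, ham, -⟩ := nextSwitch_spec hm
          obtain ⟨m', rfl⟩ : ∃ m', m = m' + 1 := ⟨m - 1, by omega⟩
          obtain ⟨V, hV, hVnd, hVmem⟩ := ih (nodeOnWire_otherWire w _ u)
            (by rw [← greedyEnd_succ_of_some hm]; exact hend) (a :: cont)
          rw [otherWire_otherWire hm3] at hV
          refine ⟨V ++ (m' + 1) :: segList w u (m' + 1) a, ?_, ?_, fun j hj => ?_⟩
          · rw [greedySwitches_reverse_append hm, hV]
            simp [visitTail]
          · exact nodup_append_cons_of_gt hVnd (segList_nodup w u _ a) (fun j hj => (hVmem j hj).1)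
              fun j hj => ((mem_segList_of_gt ham).mp hj).2.2
          · rcases List.mem_append.mp hj with hj | hj
            · obtain ⟨hmj, hj2, hj3⟩ := hVmem j hj
              rw [greedyWire_succ_of_le hm hmj.le]
              exact ⟨by omega, hj2, hj3⟩
            · rcases List.mem_cons.mp hj with rfl | hj
              · rw [greedyWire_succ_of_le hm le_rfl, greedyWire_self]
                exact ⟨ham, hm2, nodeOnWire_otherWire w _ u⟩
              · obtain ⟨hjv, haj, hjm⟩ := (mem_segList_of_gt ham).mp hj
                rw [greedyWire_succ_of_lt hm hjm]
                exact ⟨haj, (mem_nodesOn.mp hjv).2⟩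

lemma wireSeq_ascWalk {fuel u a : ℕ} (hend : greedyEnd w (ascTrigger n) fuel u a = α)
    (hon : NodeOnWire w a u) (cont : List ℕ) :
    wireSeq w α ((greedySwitches w (ascTrigger n) fuel u a).reverse.map Prod.fst ++ a :: cont) =
      ((greedySwitches w (ascTrigger n) fuel u a).map Prod.snd).reverse ++
        u :: wireSeq w (otherWire w a u) cont := by
  induction fuel generalizing u a cont with
  | zero => obtain rfl : u = α := hend; rfl
  | succ fuel ih =>
      cases hm : nextSwitch w (ascTrigger n) u a with
      | none =>
          obtain rfl : u = α := by rw [← hend, greedyEnd_succ_of_none hm]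
          simp [greedySwitches, hm, wireSeq]
      | some m =>
          obtain ⟨⟨hm1, -, hm3⟩, -, -⟩ := nextSwitch_spec hm
          obtain ⟨m', rfl⟩ : ∃ m', m = m' + 1 := ⟨m - 1, by omega⟩
          rw [greedySwitches_reverse_append hm, ih (by rw [← greedyEnd_succ_of_some hm]; exact hend)
            (nodeOnWire_otherWire w _ u), otherWire_otherWire hm3]
          simp [greedySwitches, hm, wireSeq]

lemma pathSwitches_ascWalk {fuel u a : ℕ} (hend : greedyEnd w (ascTrigger n) fuel u a = α)
    (hon : NodeOnWire w a u) (cont : List ℕ) :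
    ∃ Pre, pathSwitches w α
        ((greedySwitches w (ascTrigger n) fuel u a).reverse.map Prod.fst ++ a :: cont) =
          Pre ++ (a, u, otherWire w a u) :: pathSwitches w (otherWire w a u) cont ∧
      ∀ e ∈ Pre, e.2.1 ≤ α ∧ e.2.2 ≤ α := by
  induction fuel generalizing u a cont with
  | zero => obtain rfl : u = α := hend; exact ⟨[], rfl, by simp⟩
  | succ fuel ih =>
      cases hm : nextSwitch w (ascTrigger n) u a with
      | none =>
          obtain rfl : u = α := by rw [← hend, greedyEnd_succ_of_none hm]
          exact ⟨[], by simp [greedySwitches, hm, pathSwitches], by simp⟩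
      | some m =>
          obtain ⟨⟨hm1, -, hm3⟩, -, -⟩ := nextSwitch_spec hm
          obtain ⟨m', rfl⟩ : ∃ m', m = m' + 1 := ⟨m - 1, by omega⟩
          have hend' : greedyEnd w (ascTrigger n) fuel (otherWire w (m' + 1) u) (m' + 1) = α := by
            rw [← greedyEnd_succ_of_some hm]; exact hend
          have hu : u ≤ α := hend ▸ le_greedyEnd (fun _ _ => ascTrigger_lt) _ u a
          have hx : otherWire w (m' + 1) u ≤ α :=
            hend' ▸ le_greedyEnd (fun _ _ => ascTrigger_lt) _ _ _
          obtain ⟨Pre, hPre, hPreα⟩ := ih hend' (nodeOnWire_otherWire w _ u) (a :: cont)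
          rw [otherWire_otherWire hm3] at hPre
          refine ⟨Pre ++ [(m' + 1, otherWire w (m' + 1) u, u)], ?_, ?_⟩
          · rw [greedySwitches_reverse_append hm, hPre]
            simp [pathSwitches]
          · simpa [or_imp, forall_and, hx, hu] using hPreα

end Legality

/-! ### Relative position of two routes -/

/-- Between the levels `h` and `h + 1`, a route on `ℓ_r` goes on along `ℓ_{r'}`. -/
def RouteStep (w : List ℕ) (h r r' : ℕ) : Prop :=
  r' = r ∨ (NodeOnWire w (h + 1) r ∧ r' = otherWire w (h + 1) r)

section Routes

variable {n : ℕ} {w : List ℕ} {h : ℕ}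

/-- Routes keep their left-to-right order, except where they cross at a node that both pass
straight through. -/
lemma wireCol_lt_succ_of_routeStep (hh : h < w.length) {r r' s s' : ℕ}
    (hr : RouteStep w h r r') (hs : RouteStep w h s s') (hsr : s ≠ r) (hsr' : s ≠ r')
    (hrs' : r ≠ s')
    (hmeet : r' = r → s' = s → ¬ (NodeOnWire w (h + 1) r ∧ NodeOnWire w (h + 1) s))
    (hlt : wireCol w h r < wireCol w h s) : wireCol w (h + 1) r' < wireCol w (h + 1) s' := by
  rcases hr with rfl | ⟨hr, rfl⟩ <;> rcases hs with rfl | ⟨hs, rfl⟩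
  · exact (crossed_succ_iff_of_not_both hh fun ⟨h₁, h₂⟩ => hmeet rfl rfl ⟨h₂, h₁⟩).mpr hlt
  · have hr : ¬ NodeOnWire w (h + 1) r' := fun hr =>
      (eq_or_eq_otherWire hs hr).elim (fun h' => hsr h'.symm) hrs'
    rwa [wireCol_succ_of_not_nodeOnWire hh hr, wireCol_succ_otherWire hh hs]
  · have hs' : ¬ NodeOnWire w (h + 1) s' := fun hs' =>
      (eq_or_eq_otherWire hr hs').elim hsr hsr'
    rwa [wireCol_succ_of_not_nodeOnWire hh hs', wireCol_succ_otherWire hh hr]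
  · exact ((eq_or_eq_otherWire hr hs).elim hsr hsr').elim

lemma Crossed.succ_of_routeStep (hw : IsReduced n w) (hh : h < w.length) {x x' y y' : ℕ}
    (hx : RouteStep w h x x') (hy : RouteStep w h y y') (hlt : max x x' < min y y')
    (hc : Crossed w h x y) : Crossed w (h + 1) x' y' :=
  wireCol_lt_succ_of_routeStep hh hy hx (by omega) (by omega) (by omega)
    (fun _ _ hon => not_crossed_of_nodeOnWire hw hh (by omega) hon.2 hon.1 hc) hc

lemma not_crossed_succ_of_routeStep (hh : h < w.length) {x x' y y' : ℕ}
    (hx : RouteStep w h x x') (hy : RouteStep w h y y') (hlt : max x x' < min y y')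
    (hnode : x' = x → y' = y → ¬ (wireX w (h + 1) = x ∧ wireY w (h + 1) = y))
    (hc : ¬ Crossed w h x y) : ¬ Crossed w (h + 1) x' y' := by
  rw [not_crossed_iff (by omega)] at hc ⊢
  exact wireCol_lt_succ_of_routeStep hh hx hy (by omega) (by omega) (by omega)
    (fun hx' hy' hon => hnode hx' hy' (wireX_wireY_of_wireCol_lt hon.1 hon.2 hc)) hc

end Routes

def ascSwitches (n : ℕ) (w : List ℕ) (k t : ℕ) : List (ℕ × ℕ) :=
  greedySwitches w (ascTrigger n) (w.length + 1) k t

def ascWire (n : ℕ) (w : List ℕ) (k t h : ℕ) : ℕ :=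
  greedyWire w (ascTrigger n) (w.length + 1) k t h

/-- The wire `ℓ_α` on which the ascending walk ends; the canonical path lives in `G(i, α)`. -/
def ascEnd (n : ℕ) (w : List ℕ) (k t : ℕ) : ℕ :=
  greedyEnd w (ascTrigger n) (w.length + 1) k t

def descSwitches (n : ℕ) (w : List ℕ) (k t : ℕ) : List (ℕ × ℕ) :=
  greedySwitches w (descTrigger (ascEnd n w k t)) (w.length + 1) (n + 1) t

def descWire (n : ℕ) (w : List ℕ) (k t h : ℕ) : ℕ :=
  greedyWire w (descTrigger (ascEnd n w k t)) (w.length + 1) (n + 1) t h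

def descEnd (n : ℕ) (w : List ℕ) (k t : ℕ) : ℕ :=
  greedyEnd w (descTrigger (ascEnd n w k t)) (w.length + 1) (n + 1) t

section Walks

variable {n : ℕ} {w : List ℕ} {k t h : ℕ}

lemma ascWire_self : ascWire n w k t t = k := greedyWire_self _ _ _

lemma descWire_self : descWire n w k t t = n + 1 := greedyWire_self _ _ _

lemma ascWire_of_length_le (hh : w.length ≤ h) : ascWire n w k t h = ascEnd n w k t :=
  greedyWire_of_length_le hh

lemma descWire_of_length_le (hh : w.length ≤ h) : descWire n w k t h = descEnd n w k t :=
  greedyWire_of_length_le hh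

lemma ascWire_mem_Icc (h : ℕ) : k ≤ ascWire n w k t h ∧ ascWire n w k t h ≤ ascEnd n w k t :=
  greedyWire_mem_Icc_of_lt fun _ _ => ascTrigger_lt

lemma descWire_mem_Icc (h : ℕ) :
    descEnd n w k t ≤ descWire n w k t h ∧ descWire n w k t h ≤ n + 1 :=
  greedyWire_mem_Icc_of_gt fun _ _ => descTrigger_lt

lemma le_ascEnd : k ≤ ascEnd n w k t := le_greedyEnd (fun _ _ => ascTrigger_lt) _ _ _

lemma ascEnd_le (hk : k ≤ n) : ascEnd n w k t ≤ n :=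
  greedyEnd_induction (· ≤ n) (fun _ _ hT => (ascTrigger_eq_true.mp hT).2) hk

lemma ascEnd_lt_descEnd (hk : k ≤ n) : ascEnd n w k t < descEnd n w k t :=
  greedyEnd_induction (ascEnd n w k t < ·)
    (fun _ _ hT => (descTrigger_eq_true.mp hT).1)
    (by have := ascEnd_le (w := w) (t := t) hk; omega)

lemma ascWire_lt_descWire (hk : k ≤ n) (h h' : ℕ) : ascWire n w k t h < descWire n w k t h' := by
  have := (ascWire_mem_Icc (n := n) (w := w) (k := k) (t := t) h).2
  have := (descWire_mem_Icc (n := n) (w := w) (k := k) (t := t) h').1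
  have := ascEnd_lt_descEnd (w := w) (t := t) hk
  omega

lemma ascWire_succ (hth : t ≤ h) :
    ascWire n w k t (h + 1) = ascWire n w k t h ∨
      (h < w.length ∧ RouteStep w h (ascWire n w k t h) (ascWire n w k t (h + 1)) ∧
        ascWire n w k t h < ascWire n w k t (h + 1) ∧ ascWire n w k t (h + 1) ≤ n) := by
  rcases greedyWire_succ (T := ascTrigger n) (by omega : w.length < t + (w.length + 1)) hth with
    h1 | ⟨h1, h2, h3, h4⟩
  · exact Or.inl h1
  · rw [ascTrigger_eq_true] at h4
    exact Or.inr ⟨h1, Or.inr ⟨h2, h3⟩, h4⟩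

lemma routeStep_ascWire (hth : t ≤ h) :
    RouteStep w h (ascWire n w k t h) (ascWire n w k t (h + 1)) := by
  rcases ascWire_succ hth with h1 | ⟨-, h1, -⟩
  exacts [Or.inl h1, h1]

lemma descWire_succ (hth : t ≤ h) :
    descWire n w k t (h + 1) = descWire n w k t h ∨
      (h < w.length ∧ RouteStep w h (descWire n w k t h) (descWire n w k t (h + 1)) ∧
        ascEnd n w k t < descWire n w k t (h + 1) ∧
        descWire n w k t (h + 1) < descWire n w k t h) := by
  rcases greedyWire_succ (T := descTrigger (ascEnd n w k t))
    (by omega : w.length < t + (w.length + 1)) hth with h1 | ⟨h1, h2, h3, h4⟩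
  · exact Or.inl h1
  · rw [descTrigger_eq_true] at h4
    exact Or.inr ⟨h1, Or.inr ⟨h2, h3⟩, h4⟩

lemma routeStep_descWire (hth : t ≤ h) :
    RouteStep w h (descWire n w k t h) (descWire n w k t (h + 1)) := by
  rcases descWire_succ hth with h1 | ⟨-, h1, -⟩
  exacts [Or.inl h1, h1]

lemma not_ascTrigger_of_straight (hth : t ≤ h) (hh : h < w.length)
    (heq : ascWire n w k t (h + 1) = ascWire n w k t h)
    (hon : NodeOnWire w (h + 1) (ascWire n w k t h)) :
    ¬ (ascWire n w k t h < otherWire w (h + 1) (ascWire n w k t h) ∧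
        otherWire w (h + 1) (ascWire n w k t h) ≤ n) := by
  have := trigger_false_of_greedyWire_succ (T := ascTrigger n)
    (by omega : w.length < t + (w.length + 1)) hth hh heq hon
  rwa [ascTrigger_eq_false] at this

lemma not_descTrigger_of_straight (hth : t ≤ h) (hh : h < w.length)
    (heq : descWire n w k t (h + 1) = descWire n w k t h)
    (hon : NodeOnWire w (h + 1) (descWire n w k t h)) :
    ¬ (ascEnd n w k t < otherWire w (h + 1) (descWire n w k t h) ∧
        otherWire w (h + 1) (descWire n w k t h) < descWire n w k t h) := by
  have := trigger_false_of_greedyWire_succ (T := descTrigger (ascEnd n w k t))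
    (by omega : w.length < t + (w.length + 1)) hth hh heq hon
  rwa [descTrigger_eq_false] at this

end Walks

section Invariants

variable {n : ℕ} {w : List ℕ} {k t : ℕ}

lemma crossed_start (hw : IsReduced n w) (hk : k ≤ n) (ht : ValidNode w t)
    (htk : NodeOnWire w t k) (htn : NodeOnWire w t (n + 1)) : Crossed w t k (n + 1) := by
  obtain ⟨t, rfl⟩ : ∃ t', t = t' + 1 := ⟨t - 1, by have := ht.1; omega⟩
  exact crossed_succ_of_nodeOnWire hw (by have := ht.2; omega) (by omega) htk htn

lemma crossed_ascWire_descWire (hw : IsReduced n w) (hk : k ≤ n) (ht : ValidNode w t)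
    (htk : NodeOnWire w t k) (htn : NodeOnWire w t (n + 1)) {h : ℕ} (hth : t ≤ h)
    (hh : h ≤ w.length) : Crossed w h (ascWire n w k t h) (descWire n w k t h) := by
  induction h, hth using Nat.le_induction with
  | base => rw [ascWire_self, descWire_self]; exact crossed_start hw hk ht htk htn
  | succ h hth ih =>
      have := ascWire_lt_descWire (w := w) (t := t) hk
      exact (ih (by omega)).succ_of_routeStep hw (by omega) (routeStep_ascWire hth)
        (routeStep_descWire hth) (max_lt_iff.mpr ⟨lt_min (this _ _) (this _ _),
          lt_min (this _ _) (this _ _)⟩)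

lemma crossed_ascWire_last (hw : IsReduced n w) (hk : k ≤ n) (ht : ValidNode w t)
    (htk : NodeOnWire w t k) (htn : NodeOnWire w t (n + 1)) {h : ℕ} (hth : t ≤ h)
    (hh : h ≤ w.length) : Crossed w h (ascWire n w k t h) (n + 1) := by
  induction h, hth using Nat.le_induction with
  | base => rw [ascWire_self]; exact crossed_start hw hk ht htk htn
  | succ h hth ih =>
      have h₁ := (ascWire_mem_Icc (n := n) (w := w) (k := k) (t := t) h).2
      have h₂ := (ascWire_mem_Icc (n := n) (w := w) (k := k) (t := t) (h + 1)).2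
      have h₃ := ascEnd_le (w := w) (t := t) hk
      exact (ih (by omega)).succ_of_routeStep hw (by omega) (routeStep_ascWire hth) (Or.inl rfl)
        (by omega)

lemma descWire_eq_or_crossed (hw : IsReduced n w) {h : ℕ} (hth : t ≤ h) (hh : h ≤ w.length) :
    descWire n w k t h = n + 1 ∨ Crossed w h (descWire n w k t h) (n + 1) := by
  induction h, hth using Nat.le_induction with
  | base => exact Or.inl descWire_self
  | succ h hth ih =>
      rcases ih (by omega) with hd | hc
      · rcases descWire_succ hth with h₁ | ⟨hh', h₁ | ⟨hon, h₁⟩, -, h₂⟩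
        · exact Or.inl (h₁.trans hd)
        · exact absurd h₁ h₂.ne
        · rw [hd] at hon h₁ h₂
          exact Or.inr (crossed_succ_of_nodeOnWire hw hh' h₂ (h₁ ▸ nodeOnWire_otherWire w _ _) hon)
      · have hlt : descWire n w k t h < n + 1 := by
          by_contra hge
          have := (descWire_mem_Icc (n := n) (w := w) (k := k) (t := t) h).2
          rw [show descWire n w k t h = n + 1 by omega] at hc
          exact lt_irrefl _ hc
        have := (descWire_mem_Icc (n := n) (w := w) (k := k) (t := t) (h + 1)).2
        refine Or.inr (hc.succ_of_routeStep hw (by omega) (routeStep_descWire hth) (Or.inl rfl) ?_)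
        rcases descWire_succ (n := n) (w := w) (k := k) hth with h₁ | ⟨-, -, -, h₂⟩ <;> omega

lemma crossed_start_ascEnd_succ (hw : IsReduced n w) (hk1 : 1 ≤ k) (hα : ascEnd n w k t < n)
    (ht : ValidNode w t) : Crossed w t k (ascEnd n w k t + 1) := by
  set α := ascEnd n w k t
  by_contra hc
  have hnot : ∀ h, t ≤ h → h ≤ w.length → ¬ Crossed w h (ascWire n w k t h) (α + 1) := by
    intro h hth hh
    induction h, hth using Nat.le_induction with
    | base => rwa [ascWire_self]
    | succ h hth ih =>
        have h₁ := (ascWire_mem_Icc (n := n) (w := w) (k := k) (t := t) h).2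
        have h₂ := (ascWire_mem_Icc (n := n) (w := w) (k := k) (t := t) (h + 1)).2
        refine not_crossed_succ_of_routeStep (by omega) (routeStep_ascWire hth) (Or.inl rfl)
          (by omega) (fun hstay _ hXY => ?_) (ih (by omega))
        have hother := otherWire_of_wireX_eq hXY.1
        rw [hXY.2] at hother
        exact not_ascTrigger_of_straight hth (by omega) hstay (Or.inl hXY.1) (by omega)
  refine hnot w.length ht.2 le_rfl ?_
  rw [ascWire_of_length_le le_rfl]
  exact crossed_length hw (by have := le_ascEnd (n := n) (w := w) (k := k) (t := t); omega)
    (by omega) (by omega)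

lemma crossed_ascEnd_succ_last (hw : IsReduced n w) (hα : ascEnd n w k t + 1 < descEnd n w k t)
    (ht : ValidNode w t) : Crossed w t (ascEnd n w k t + 1) (n + 1) := by
  set α := ascEnd n w k t
  by_contra hc
  have hnot : ∀ h, t ≤ h → h ≤ w.length → ¬ Crossed w h (α + 1) (descWire n w k t h) := by
    intro h hth hh
    induction h, hth using Nat.le_induction with
    | base => rwa [descWire_self]
    | succ h hth ih =>
        have h₁ := (descWire_mem_Icc (n := n) (w := w) (k := k) (t := t) h).1
        have h₂ := (descWire_mem_Icc (n := n) (w := w) (k := k) (t := t) (h + 1)).1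
        refine not_crossed_succ_of_routeStep (by omega) (Or.inl rfl) (routeStep_descWire hth)
          (by omega) (fun _ hstay hXY => ?_) (ih (by omega))
        have hother := otherWire_of_wireY_eq hXY.2
        rw [hXY.1] at hother
        exact not_descTrigger_of_straight hth (by omega) hstay (Or.inr hXY.2) (by omega)
  refine hnot w.length ht.2 le_rfl ?_
  rw [descWire_of_length_le le_rfl]
  have := (descWire_mem_Icc (n := n) (w := w) (k := k) (t := t) w.length).2
  rw [descWire_of_length_le le_rfl] at this
  exact crossed_length hw (by omega) hα this

lemma descEnd_eq (hw : IsReduced n w) (hk1 : 1 ≤ k) (hk : k ≤ n) (ht : ValidNode w t)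
    (htk : NodeOnWire w t k) (htn : NodeOnWire w t (n + 1)) :
    descEnd n w k t = ascEnd n w k t + 1 := by
  by_contra hne
  have hlt := ascEnd_lt_descEnd (w := w) (k := k) (t := t) hk
  have hdn := (descWire_mem_Icc (n := n) (w := w) (k := k) (t := t) w.length).2
  rw [descWire_of_length_le le_rfl] at hdn
  have h₁ := crossed_start_ascEnd_succ hw hk1 (by omega) ht
  have h₂ := crossed_ascEnd_succ_last (k := k) hw (by omega) ht
  obtain ⟨t, rfl⟩ : ∃ t', t = t' + 1 := ⟨t - 1, by have := ht.1; omega⟩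
  have hkn := crossed_start hw hk ht htk htn
  unfold Crossed at h₁ h₂ hkn
  rcases wireCol_succ_of_nodeOnWire (by have := ht.2; omega) htk with h₃ | h₃ <;>
    rcases wireCol_succ_of_nodeOnWire (by have := ht.2; omega) htn with h₄ | h₄ <;> omega

lemma ascWire_succ_eq_of_nodeOnWire (hk : k ≤ n) {h : ℕ} (hth : t ≤ h)
    (hd : NodeOnWire w (h + 1) (descWire n w k t (h + 1))) :
    ascWire n w k t (h + 1) = ascWire n w k t h := by
  rcases routeStep_ascWire (n := n) (k := k) hth with h₁ | ⟨hon, h₁⟩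
  · exact h₁
  · have := ascWire_lt_descWire (w := w) (t := t) hk
    rcases eq_or_eq_otherWire hon hd with h₂ | h₂
    · exact absurd h₂ (this h (h + 1)).ne'
    · exact absurd (h₂.trans h₁.symm) (this (h + 1) (h + 1)).ne'

lemma descWire_succ_eq_of_nodeOnWire (hk : k ≤ n) {h : ℕ} (hth : t ≤ h)
    (ha : NodeOnWire w (h + 1) (ascWire n w k t (h + 1))) :
    descWire n w k t (h + 1) = descWire n w k t h := by
  rcases routeStep_descWire (n := n) (k := k) hth with h₁ | ⟨hon, h₁⟩
  · exact h₁
  · have := ascWire_lt_descWire (w := w) (t := t) hk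
    rcases eq_or_eq_otherWire hon ha with h₂ | h₂
    · exact absurd h₂ (this (h + 1) h).ne
    · exact absurd (h₂.trans h₁.symm) (this (h + 1) (h + 1)).ne

lemma not_nodeOnWire_ascWire_and_descWire (hw : IsReduced n w) (hk : k ≤ n)
    (ht : ValidNode w t) (htk : NodeOnWire w t k) (htn : NodeOnWire w t (n + 1)) {j : ℕ}
    (htj : t < j) (hj : j ≤ w.length) :
    ¬ (NodeOnWire w j (ascWire n w k t j) ∧ NodeOnWire w j (descWire n w k t j)) := by
  rintro ⟨ha, hd⟩
  obtain ⟨h, rfl⟩ : ∃ h, j = h + 1 := ⟨j - 1, by omega⟩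
  have hstay := descWire_succ_eq_of_nodeOnWire hk (by omega) ha
  rw [ascWire_succ_eq_of_nodeOnWire hk (by omega) hd] at ha
  rw [hstay] at hd
  exact not_crossed_of_nodeOnWire hw (by omega) (ascWire_lt_descWire hk h h) ha hd
    (crossed_ascWire_descWire hw hk ht htk htn (by omega) (by omega))

end Invariants

lemma not_aboveWireLast {n : ℕ} {w : List ℕ} {j r : ℕ} (hj : ValidNode w j)
    (hr : NodeOnWire w j r) (hc : r = n + 1 ∨ Crossed w j r (n + 1)) :
    ¬ AboveWireLast n w j := by
  obtain ⟨h, rfl⟩ : ∃ h, j = h + 1 := ⟨j - 1, by have := hj.1; omega⟩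
  have hh : h < w.length := hj.2
  unfold AboveWireLast
  rcases hc with rfl | hc
  · rcases wireCol_succ_of_nodeOnWire hh hr with h₁ | h₁ <;> omega
  · unfold Crossed at hc
    rcases wireCol_succ_of_nodeOnWire hh hr with h₁ | h₁ <;> omega

/-! ### The canonical path -/

def canonicalPath (n : ℕ) (w : List ℕ) (k t : ℕ) : List ℕ :=
  (ascSwitches n w k t).reverse.map Prod.fst ++ t :: (descSwitches n w k t).map Prod.fst

section CanonicalPath

variable {n : ℕ} {w : List ℕ} {k t : ℕ}

lemma otherWire_start (hw : IsReduced n w) (hk : k ≤ n) (ht : ValidNode w t)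
    (htk : NodeOnWire w t k) (htn : NodeOnWire w t (n + 1)) : otherWire w t k = n + 1 := by
  obtain ⟨t, rfl⟩ : ∃ t', t = t' + 1 := ⟨t - 1, by have := ht.1; omega⟩
  have := wireX_lt_wireY hw (by have := ht.2; omega : t < w.length)
  have hX : wireX w (t + 1) = k := by rcases htk with h | h <;> rcases htn with h' | h' <;> omega
  rw [otherWire_of_wireX_eq hX]
  rcases htn with h | h <;> omega

lemma travelOK_descSwitches (hw : IsReduced n w) (hk1 : 1 ≤ k) (hk : k ≤ n) (ht : ValidNode w t)
    (htk : NodeOnWire w t k) (htn : NodeOnWire w t (n + 1)) :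
    TravelOK w (ascEnd n w k t) (otherWire w t k) t ((descSwitches n w k t).map Prod.fst) := by
  rw [otherWire_start hw hk ht htk htn]
  exact travelOK_descWalk (by have := ascEnd_le (w := w) (t := t) hk; omega)
    (descEnd_eq hw hk1 hk ht htk htn)

lemma visitList_canonicalPath_nodup (hw : IsReduced n w) (hk : k ≤ n) (ht : ValidNode w t)
    (htk : NodeOnWire w t k) (htn : NodeOnWire w t (n + 1)) :
    (visitList w (ascEnd n w k t) (canonicalPath n w k t)).Nodup := by
  obtain ⟨V, hV, hVnd, hVmem⟩ := visitList_ascWalk (n := n) (α := ascEnd n w k t) htk rfl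
    ((descSwitches n w k t).map Prod.fst)
  obtain ⟨hDnd, hDmem⟩ := visitTail_greedySwitches (w := w)
    (T := descTrigger (ascEnd n w k t)) (w.length + 1) (n + 1) t
  rw [canonicalPath, ascSwitches, hV, otherWire_start hw hk ht htk htn]
  refine hVnd.append (List.nodup_cons.mpr ⟨fun hc => (hDmem t hc).1.false, hDnd⟩)
    fun j hjV hjD => ?_
  obtain ⟨htj, hj, ha⟩ := hVmem j hjV
  rcases List.mem_cons.mp hjD with rfl | hjD
  · exact htj.false
  · exact not_nodeOnWire_ascWire_and_descWire hw hk ht htk htn htj hj ⟨ha, (hDmem j hjD).2.2⟩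

lemma isGPPath_canonicalPath (hw : IsReduced n w) (hk1 : 1 ≤ k) (hk : k ≤ n) (ht : ValidNode w t)
    (htk : NodeOnWire w t k) (htn : NodeOnWire w t (n + 1)) :
    IsGPPath n w (ascEnd n w k t) (canonicalPath n w k t) :=
  isGPPath_iff.mpr ⟨hk1.trans le_ascEnd, ascEnd_le hk,
    travelOKFromBottom_ascWalk (ascEnd_le hk) ht htk rfl
      (travelOK_descSwitches hw hk1 hk ht htk htn),
    visitList_canonicalPath_nodup hw hk ht htk htn⟩

lemma pathSwitches_canonicalPath (hw : IsReduced n w) (hk : k ≤ n) (ht : ValidNode w t)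
    (htk : NodeOnWire w t k) (htn : NodeOnWire w t (n + 1)) :
    ∃ Pre, pathSwitches w (ascEnd n w k t) (canonicalPath n w k t) =
        Pre ++ (t, k, n + 1) :: pathSwitches w (n + 1) ((descSwitches n w k t).map Prod.fst) ∧
      ∀ e ∈ Pre, e.2.1 ≤ ascEnd n w k t ∧ e.2.2 ≤ ascEnd n w k t := by
  rw [← otherWire_start hw hk ht htk htn]
  exact pathSwitches_ascWalk rfl htk _

lemma peaks_canonicalPath (hw : IsReduced n w) (hk : k ≤ n) (ht : ValidNode w t)
    (htk : NodeOnWire w t k) (htn : NodeOnWire w t (n + 1)) :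
    peaks w (ascEnd n w k t) (canonicalPath n w k t) = [t] := by
  obtain ⟨Pre, hP, hPre⟩ := pathSwitches_canonicalPath hw hk ht htk htn
  have hD := mem_pathSwitches_greedySwitches (w := w) (T := descTrigger (ascEnd n w k t))
    (fuel := w.length + 1) (v := n + 1) (b := t) (ascEnd n w k t < ·)
    (fun _ _ hT => (descTrigger_eq_true.mp hT).1)
    (by have := ascEnd_le (w := w) (t := t) hk; omega)
  have hα := ascEnd_le (w := w) (t := t) hk
  have hkα := le_ascEnd (n := n) (w := w) (k := k) (t := t)
  rw [peaks, hP, List.filter_append, List.filter_eq_nil_iff.mpr, List.filter_cons_of_pos,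
    List.filter_eq_nil_iff.mpr]
  · rfl
  · intro e he
    have := hD e he
    simp only [decide_eq_true_eq]
    omega
  · simp only [decide_eq_true_eq]
    omega
  · intro e he
    have := hPre e he
    simp only [decide_eq_true_eq]
    omega

lemma wireSeq_canonicalPath (hw : IsReduced n w) (hk : k ≤ n) (ht : ValidNode w t)
    (htk : NodeOnWire w t k) (htn : NodeOnWire w t (n + 1)) :
    wireSeq w (ascEnd n w k t) (canonicalPath n w k t) =
      ((ascSwitches n w k t).map Prod.snd).reverse ++ k :: (n + 1) ::
        (descSwitches n w k t).map Prod.snd := by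
  rw [canonicalPath, ascSwitches, wireSeq_ascWalk (n := n) (α := ascEnd n w k t) rfl htk,
    otherWire_start hw hk ht htk htn, descSwitches, wireSeq_greedySwitches]

lemma not_aboveWireLast_of_mem_visitList (hw : IsReduced n w) (hk : k ≤ n) (ht : ValidNode w t)
    (htk : NodeOnWire w t k) (htn : NodeOnWire w t (n + 1)) {j : ℕ}
    (hj : j ∈ visitList w (ascEnd n w k t) (canonicalPath n w k t)) :
    ¬ AboveWireLast n w j := by
  obtain ⟨V, hV, -, hVmem⟩ := visitList_ascWalk (n := n) (α := ascEnd n w k t) htk rfl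
    ((descSwitches n w k t).map Prod.fst)
  rw [canonicalPath, ascSwitches, hV, otherWire_start hw hk ht htk htn] at hj
  rcases List.mem_append.mp hj with hj | hj
  · obtain ⟨htj, hjl, hon⟩ := hVmem j hj
    exact not_aboveWireLast ⟨by omega, hjl⟩ hon
      (Or.inr (crossed_ascWire_last hw hk ht htk htn htj.le hjl))
  rcases List.mem_cons.mp hj with rfl | hj
  · exact not_aboveWireLast ht htn (Or.inl rfl)
  · obtain ⟨htj, hjl, hon⟩ := (visitTail_greedySwitches (w := w) _ _ _).2 j hj
    exact not_aboveWireLast ⟨by omega, hjl⟩ hon (descWire_eq_or_crossed hw htj.le hjl)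

end CanonicalPath

lemma ascSwitches_pairwise (n : ℕ) (w : List ℕ) (k t : ℕ) :
    ((ascSwitches n w k t).map Prod.snd).reverse.Pairwise (· > ·) := by
  have := isChain_greedySwitches (w := w) (T := ascTrigger n) (· < ·) (fun _ _ => ascTrigger_lt)
    (w.length + 1) k t
  rw [List.isChain_iff_pairwise, List.pairwise_cons] at this
  exact List.pairwise_reverse.mpr this.2

lemma descSwitches_pairwise (n : ℕ) (w : List ℕ) (k t : ℕ) :
    ((descSwitches n w k t).map Prod.snd).Pairwise (· > ·) := by
  have := isChain_greedySwitches (w := w) (T := descTrigger (ascEnd n w k t)) (· > ·)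
    (fun _ _ => descTrigger_lt) (w.length + 1) (n + 1) t
  rw [List.isChain_iff_pairwise, List.pairwise_cons] at this
  exact this.2

theorem statement10_general (n : ℕ) (i : List ℕ) (hi : IsReduced n i)
    (k : ℕ) (hk1 : 1 ≤ k) (hk2 : k ≤ n) (t : ℕ) (ht : ValidNode i t)
    (htk : NodeOnWire i t k) (htn : NodeOnWire i t (n + 1)) :
    ∃ (k' : ℕ) (ms rs ss : List ℕ),
      IsGPPath n i k' ms ∧
      peaks i k' ms = [t] ∧
      (t, k, n + 1) ∈ pathSwitches i k' ms ∧
      (∀ j ∈ visitList i k' ms, ¬ AboveWireLast n i j) ∧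
      wireSeq i k' ms = rs ++ k :: (n + 1) :: ss ∧
      rs.Pairwise (· > ·) ∧ ss.Pairwise (· > ·) := by
  obtain ⟨Pre, hP, -⟩ := pathSwitches_canonicalPath hi hk2 ht htk htn
  exact ⟨ascEnd n i k t, canonicalPath n i k t, _, _,
    isGPPath_canonicalPath hi hk1 hk2 ht htk htn,
    peaks_canonicalPath hi hk2 ht htk htn,
    hP ▸ List.mem_append_right _ List.mem_cons_self,
    fun _ => not_aboveWireLast_of_mem_visitList hi hk2 ht htk htn,
    wireSeq_canonicalPath hi hk2 ht htk htn,
    ascSwitches_pairwise n i k t, descSwitches_pairwise n i k t⟩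

/-- existence of `D`-canonical paths.
Let `t` be the node at which `ℓ_k` and `ℓ_{n+1}` intersect.  There is a rigorous path
with unique peak `t`, switching from `ℓ_k` to `ℓ_{n+1}` at `t`, staying (weakly) below
the wire `ℓ_{n+1}`, whose wire-expression is
`ℓ_{r_p} → ⋯ → ℓ_{r_1} → ℓ_k → ℓ_{n+1} → ℓ_{s_q} → ⋯ → ℓ_{s_1}` with
`r_1 < ⋯ < r_p` and `s_1 > ⋯ > s_q` (so the travel-order lists `rs = [r_p,…,r_1]`
and `ss = [s_q,…,s_1]` are both strictly decreasing). -/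
theorem statement10 (n : ℕ) (hn : 1 ≤ n) (i : List ℕ) (hi : IsReduced n i)
    (k : ℕ) (hk1 : 1 ≤ k) (hk2 : k ≤ n) (t : ℕ) (ht : ValidNode i t)
    (htk : NodeOnWire i t k) (htn : NodeOnWire i t (n + 1)) :
    ∃ (k' : ℕ) (ms rs ss : List ℕ),
      IsGPPath n i k' ms ∧
      peaks i k' ms = [t] ∧
      (t, k, n + 1) ∈ pathSwitches i k' ms ∧
      (∀ j ∈ visitList i k' ms, ¬ AboveWireLast n i j) ∧
      wireSeq i k' ms = rs ++ k :: (n + 1) :: ss ∧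
      rs.Pairwise (· > ·) ∧ ss.Pairwise (· > ·) :=
  statement10_general n i hi k hk1 hk2 t ht htk htn

end StringPolytope
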